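/- arXiv:1811.11399 — 9 statements merged into one kernel-verified Lean document; each statement's English description precedes it below -/
import Mathlib

section
/- Let f, g ∈ End^0(G). If the multigraph Γ_{f,g} is a tree, then the pair (f,g) is fixed point free. -/
/-!
STATEMENT 3: Let `f, g ∈ End⁰(G)`.  If the multigraph `Γ_{f,g}` is a tree,
then the pair `(f, g)` is fixed point free.

Setting: `n ≥ 1`, `T` a nontrivial finite group, `G = Tⁿ = (Fin n → T)`.
The vertex set `{0, 1, …, n}` is modelled by `Option (Fin n)`, with `none`
playing the role of the distinguished vertex `0` and `some i` the vertex `i`.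
An element `f ∈ End⁰(G)` is an endomorphism of `G` of the form
`f(x)ᵢ = φᵢ(x_{θ(i)})` where `θ(i) ∈ {0, …, n}`, `φᵢ` is trivial if
`θ(i) = 0`, and `φᵢ` is bijective if `θ(i) ≠ 0` (so `f(x)ᵢ = 1` when
`θ(i) = 0`).  The multigraph `Γ_{f,g}` has vertex set `{0, …, n}` and, for
each `i ∈ {1, …, n}`, one edge joining `θ_f(i)` and `θ_g(i)`; it is encoded
by the function `i ↦ s(θ_f i, θ_g i) : Fin n → Sym2 (Option (Fin n))`.
A multigraph is a tree iff it is connected and has no cycle.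
-/

/-- Adjacency in the multigraph whose `i`-th edge has ends `ends i`. -/
def MGraph.Adj {V : Type*} {n : ℕ} (ends : Fin n → Sym2 V) (a b : V) : Prop :=
  ∃ i, ends i = s(a, b)

/-- Two vertices are joined by a walk. -/
def MGraph.Reach {V : Type*} {n : ℕ} (ends : Fin n → Sym2 V) : V → V → Prop :=
  Relation.ReflTransGen (MGraph.Adj ends)

/-- The multigraph is connected. -/
def MGraph.Connected {V : Type*} {n : ℕ} (ends : Fin n → Sym2 V) : Prop :=
  ∀ a b : V, MGraph.Reach ends a b

/-- The multigraph has a cycle: for some `m`, there are `m + 1` pairwise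
distinct edges `e 0, …, e m` and `m + 1` pairwise distinct vertices
`v 0, …, v m` such that the edge `e k` joins `v k` and `v (k+1)` (indices
cyclically mod `m + 1`).  Note `m = 0` detects a loop and `m = 1` detects a
pair of parallel edges. -/
def MGraph.HasCycle {V : Type*} {n : ℕ} (ends : Fin n → Sym2 V) : Prop :=
  ∃ (m : ℕ) (e : Fin (m + 1) → Fin n) (v : Fin (m + 1) → V),
    Function.Injective e ∧ Function.Injective v ∧
      ∀ k : Fin (m + 1), ends (e k) = s(v k, v (k + 1))

/-- The multigraph is a tree: connected with no cycle. -/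
def MGraph.IsTree {V : Type*} {n : ℕ} (ends : Fin n → Sym2 V) : Prop :=
  MGraph.Connected ends ∧ ¬ MGraph.HasCycle ends

/-- `(θ, φ)` witnesses that `f` lies in `End⁰(G)`: each `φ i` is bijective
whenever `θ i ≠ none` (i.e. `θ(i) ≠ 0`), and `f(x)ᵢ = φᵢ(x_{θ(i)})`, with
the convention `x_{0} = 1` and `φᵢ` trivial when `θ(i) = 0`. -/
def End0Data {n : ℕ} {T : Type*} [Group T] (θ : Fin n → Option (Fin n))
    (φ : Fin n → (T →* T)) (f : (Fin n → T) →* (Fin n → T)) : Prop :=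
  (∀ i, (θ i).isSome → Function.Bijective (φ i)) ∧
    ∀ (x : Fin n → T) (i : Fin n), f x i = (θ i).elim 1 fun j => φ i (x j)

theorem fixed_point_free_of_tree
    (n : ℕ) (hn : 1 ≤ n) (T : Type*) [Group T] [Finite T] [Nontrivial T]
    (f g : (Fin n → T) →* (Fin n → T))
    (θf θg : Fin n → Option (Fin n)) (φf φg : Fin n → (T →* T))
    (hf : End0Data θf φf f) (hg : End0Data θg φg g)
    (htree : MGraph.IsTree fun i => s(θf i, θg i)) :
    ∀ σ : Fin n → T, f σ = g σ ↔ σ = 1 := by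
  obtain ⟨hφf, hfx⟩ := hf
  obtain ⟨hφg, hgx⟩ := hg
  intro σ
  constructor
  · intro h
    set τ : Option (Fin n) → T := fun v => v.elim 1 σ with hτ
    have key : ∀ i : Fin n, φf i (τ (θf i)) = φg i (τ (θg i)) := by
      intro i
      have hc := congrFun h i
      rw [hfx, hgx] at hc
      cases hθf : θf i <;> cases hθg : θg i <;>
        simp [hθf, hθg, hτ] at hc ⊢ <;> simp [hc]
    have step : ∀ a b : Option (Fin n),
        MGraph.Adj (fun i => s(θf i, θg i)) a b → τ a = 1 → τ b = 1 := by
      intro a b ⟨i, hi⟩ ha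
      rw [Sym2.eq_iff] at hi
      have hk := key i
      rcases hi with ⟨h1, h2⟩ | ⟨h1, h2⟩
      · rw [h1, h2, ha, map_one] at hk
        cases hb : b with
        | none => simp [hτ]
        | some j =>
          have hs : (θg i).isSome := by rw [h2, hb]; rfl
          have := (hφg i hs).1 (a₁ := τ b) (a₂ := 1) (by rw [map_one, ← hk])
          exact hb ▸ this
      · rw [h2, h1, ha, map_one] at hk
        cases hb : b with
        | none => simp [hτ]
        | some j =>
          have hs : (θf i).isSome := by rw [h1, hb]; rfl
          have := (hφf i hs).1 (a₁ := τ b) (a₂ := 1) (by rw [map_one, hk])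
          exact hb ▸ this
    have hall : ∀ v : Option (Fin n), τ v = 1 := by
      intro v
      have hr := htree.1 none v
      induction hr with
      | refl => simp [hτ]
      | tail _ hadj ih => exact step _ _ hadj ih
    funext j
    exact hall (some j)
  · rintro rfl
    simp
end

section
/- Suppose that T does not admit any fixed point free automorphism. Let f, g ∈ End^0(G). If the pair (f,g) is fixed point free, then the multigraph Γ_{f,g} is a tree. -/
open Finset Function Relation

theorem exists_fixed_ne_one {T : Type*} [Group T]
    (hT : ¬ ∃ φ : MulAut T, ∀ σ : T, φ σ = σ ↔ σ = 1) (φ : MulAut T) : ∃ τ ≠ 1, φ τ = τ := by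
  by_contra! h
  exact hT ⟨φ, fun σ => ⟨fun hσ => by_contra fun hne => h σ hne hσ, fun hσ => hσ ▸ map_one φ⟩⟩

theorem eq_zero_and_eq_two_of_sum_eq {V : Type*} [DecidableEq V] {S : Finset V} {v₀ : V}
    {f : V → ℕ} (hv₀ : v₀ ∈ S) (hsum : ∑ v ∈ S, f v = 2 * (#S - 1))
    (h2 : ∀ v ∈ S, v ≠ v₀ → 2 ≤ f v) : f v₀ = 0 ∧ ∀ v ∈ S, v ≠ v₀ → f v = 2 := by
  have hle : ∀ v ∈ S.erase v₀, 2 ≤ f v :=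
    fun v hv => h2 v (mem_of_mem_erase hv) (ne_of_mem_erase hv)
  have hconst : ∑ _v ∈ S.erase v₀, 2 = 2 * (#S - 1) := by
    rw [sum_const, card_erase_of_mem hv₀, smul_eq_mul, mul_comm]
  have hlow := sum_le_sum hle
  rw [← add_sum_erase S f hv₀] at hsum
  refine ⟨by omega, fun v hv hne => ?_⟩
  exact ((sum_eq_sum_iff_of_le hle).1 (by omega) v (mem_erase.2 ⟨hne, hv⟩)).symm

section UpdateId

variable {V : Type*} [DecidableEq V] {x y : V}

theorem update_id_mem_erase {S : Finset V} {v : V} (hx : x ∈ S) (hxy : x ≠ y) (hv : v ∈ S) :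
    update id y x v ∈ S.erase y := by
  by_cases hvy : v = y
  · simp [hvy, hx, hxy]
  · simp [hvy, hv]

theorem eq_of_update_id_eq {p v : V} (h : update id y x p = v) (hv : v ≠ x) : p = v := by
  by_cases hpy : p = y
  · rw [hpy, update_self] at h
    exact absurd h.symm hv
  · rwa [update_of_ne hpy] at h

end UpdateId

namespace Multigraph

-- The sub-multigraph with vertex set `S` and edge set `F` of the multigraph `ends`; working with
-- subsets keeps edge deletions and contractions on the same vertex and edge types.
variable {V E : Type*} (ends : E → Sym2 V)

def Adj (F : Finset E) (x y : V) : Prop := ∃ i ∈ F, ends i = s(x, y)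

def Connected (S : Finset V) (F : Finset E) : Prop :=
  ∀ x ∈ S, ∀ y ∈ S, ReflTransGen (Adj ends F) x y

def HasCycle (F : Finset E) : Prop :=
  ∃ (m : ℕ) (e : Fin (m + 1) → E) (v : Fin (m + 1) → V), (∀ k, e k ∈ F) ∧
    Injective e ∧ Injective v ∧ ∀ k, ends (e k) = s(v k, v (k + 1))

def IsTree (S : Finset V) (F : Finset E) : Prop := Connected ends S F ∧ ¬ HasCycle ends F

variable {ends}

instance (F : Finset E) : Std.Symm (Adj ends F) :=
  ⟨fun _ _ ⟨i, hi, h⟩ => ⟨i, hi, h.trans Sym2.eq_swap⟩⟩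

theorem Adj.mono {F F' : Finset E} (h : F ⊆ F') {x y : V} : Adj ends F x y → Adj ends F' x y :=
  fun ⟨i, hi, he⟩ => ⟨i, h hi, he⟩

theorem isTree_singleton (v : V) : IsTree ends {v} ∅ := by
  refine ⟨?_, ?_⟩
  · intro x hx y hy
    rw [mem_singleton] at hx hy
    rw [hx, hy]
  · rintro ⟨m, e, v, he, -⟩
    exact notMem_empty _ (he 0)

theorem Connected.exists_mem_ends {S : Finset V} {F : Finset E} (h : Connected ends S F)
    {x y : V} (hx : x ∈ S) (hy : y ∈ S) (hxy : x ≠ y) : ∃ i ∈ F, x ∈ ends i := by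
  rcases (h x hx y hy).cases_head with rfl | ⟨z, ⟨i, hi, he⟩, -⟩
  · exact absurd rfl hxy
  · exact ⟨i, hi, he ▸ Sym2.mem_mk_left x z⟩

section Leaf

variable [DecidableEq E] {F : Finset E} {w u : V} {e₀ : E}

theorem not_hasCycle_of_erase_leaf (h : ¬ HasCycle ends (F.erase e₀)) (hends : ends e₀ = s(w, u))
    (huw : u ≠ w) (hleaf : ∀ i ∈ F, i ≠ e₀ → w ∉ ends i) : ¬ HasCycle ends F := by
  rintro ⟨m, e, v, heF, he, hv, hcyc⟩
  by_cases hw : ∃ k, v k = w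
  · -- both cycle edges at `w` are the leaf edge, so the cycle is a loop at `w`
    obtain ⟨k, rfl⟩ := hw
    have hat : ∀ j, v k ∈ ends (e j) → e j = e₀ :=
      fun j hj => by_contra fun hne => hleaf _ (heF j) hne hj
    have h₁ : e k = e₀ := hat k (by rw [hcyc]; exact Sym2.mem_mk_left _ _)
    have h₂ : e (k - 1) = e₀ :=
      hat (k - 1) (by rw [hcyc, sub_add_cancel]; exact Sym2.mem_mk_right _ _)
    have hk : k + 1 = k := by
      calc k + 1 = k - 1 + 1 := by rw [he (h₂.trans h₁.symm)]
        _ = k := sub_add_cancel _ _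
    have hloop := hcyc k
    rw [h₁, hends, hk] at hloop
    exact huw (by simpa using hloop)
  · push Not at hw
    refine h ⟨m, e, v, fun k => mem_erase.2 ⟨fun hk => ?_, heF k⟩, he, hv, hcyc⟩
    have hwk : w ∈ ends (e k) := by rw [hk, hends]; exact Sym2.mem_mk_left _ _
    rw [hcyc, Sym2.mem_iff] at hwk
    rcases hwk with h | h <;> exact hw _ h.symm

variable [DecidableEq V] {S : Finset V}

theorem Connected.of_erase_leaf (h : Connected ends (S.erase w) (F.erase e₀)) (he₀ : e₀ ∈ F)
    (hends : ends e₀ = s(w, u)) (hu : u ∈ S) (huw : u ≠ w) : Connected ends S F := by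
  have hlift : ReflTransGen (Adj ends (F.erase e₀)) ≤ ReflTransGen (Adj ends F) :=
    ReflTransGen.mono fun _ _ => Adj.mono (erase_subset _ _)
  have hroot : ∀ x ∈ S, ∃ x' ∈ S.erase w, ReflTransGen (Adj ends F) x x' := by
    intro x hx
    by_cases hxw : x = w
    · exact ⟨u, mem_erase.2 ⟨huw, hu⟩, .single ⟨e₀, he₀, hxw ▸ hends⟩⟩
    · exact ⟨x, mem_erase.2 ⟨hxw, hx⟩, .refl⟩
  intro x hx y hy
  obtain ⟨x', hx', hxx'⟩ := hroot x hx
  obtain ⟨y', hy', hyy'⟩ := hroot y hy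
  exact hxx'.trans ((hlift _ _ (h x' hx' y' hy')).trans (Std.Symm.symm _ _ hyy'))

theorem IsTree.of_erase_leaf (h : IsTree ends (S.erase w) (F.erase e₀)) (he₀ : e₀ ∈ F)
    (hends : ends e₀ = s(w, u)) (hu : u ∈ S) (huw : u ≠ w)
    (hleaf : ∀ i ∈ F, i ≠ e₀ → w ∉ ends i) : IsTree ends S F :=
  ⟨h.1.of_erase_leaf he₀ hends hu huw, not_hasCycle_of_erase_leaf h.2 hends huw hleaf⟩

end Leaf

theorem IsTree.mgraph_isTree {n : ℕ} {ends : Fin n → Sym2 V} [Fintype V]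
    (h : IsTree ends univ univ) : MGraph.IsTree ends :=
  ⟨fun x y => ReflTransGen.mono (fun _ _ ⟨i, _, hi⟩ => ⟨i, hi⟩) _ _
      (h.1 x (mem_univ x) y (mem_univ y)),
    fun ⟨m, e, v, he, hv, hc⟩ => h.2 ⟨m, e, v, fun _ => mem_univ _, he, hv, hc⟩⟩

end Multigraph

namespace EdgeSystem

variable {T V E : Type*} [Group T] (a b : E → V) (β : E → MulAut T)

def IsSolution (F : Finset E) (σ : V → T) : Prop := ∀ i ∈ F, σ (b i) = β i (σ (a i))

def IsRigid (S : Finset V) (F : Finset E) (v₀ : V) : Prop :=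
  ∀ σ : V → T, σ v₀ = 1 → IsSolution a b β F σ → ∀ v ∈ S, σ v = 1

def degree [DecidableEq V] (F : Finset E) (v : V) : ℕ := #{i ∈ F | a i = v} + #{i ∈ F | b i = v}

variable {a b β} [DecidableEq V] {S : Finset V} {F : Finset E} {v₀ w : V}

theorem sum_degree (hab : ∀ i ∈ F, a i ∈ S ∧ b i ∈ S) : ∑ v ∈ S, degree a b F v = 2 * #F := by
  unfold degree
  rw [sum_add_distrib, ← card_eq_sum_card_fiberwise fun i hi => (hab i hi).1,
    ← card_eq_sum_card_fiberwise fun i hi => (hab i hi).2, two_mul]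

theorem degree_eq_zero_iff : degree a b F w = 0 ↔ ∀ i ∈ F, a i ≠ w ∧ b i ≠ w := by
  simp [degree, filter_eq_empty_iff, forall_and]

theorem exists_leaf_of_degree_eq_one (h : degree a b F w = 1) :
    ∃ e₀ ∈ F, ∃ u ≠ w, s(a e₀, b e₀) = s(w, u) ∧ ∀ i ∈ F, i ≠ e₀ → w ∉ s(a i, b i) := by
  have key : ∀ p q : E → V, #{i ∈ F | p i = w} = 1 → #{i ∈ F | q i = w} = 0 →
      ∃ e₀ ∈ F, ∃ u ≠ w, s(p e₀, q e₀) = s(w, u) ∧ ∀ i ∈ F, i ≠ e₀ → w ∉ s(p i, q i) := by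
    intro p q hp hq
    obtain ⟨e₀, he₀⟩ := card_eq_one.1 hp
    have hpe : ∀ i, i ∈ F ∧ p i = w ↔ i = e₀ :=
      fun i => by simpa using Finset.ext_iff.1 he₀ i
    have hq' : ∀ i ∈ F, q i ≠ w := by simpa [filter_eq_empty_iff] using hq
    obtain ⟨he₀F, hpe₀⟩ := (hpe e₀).2 rfl
    refine ⟨e₀, he₀F, q e₀, hq' e₀ he₀F, by rw [hpe₀], fun i hi hne hw => ?_⟩
    rcases Sym2.mem_iff.1 hw with h | h
    · exact hne ((hpe i).1 ⟨hi, h.symm⟩)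
    · exact hq' i hi h.symm
  unfold degree at h
  obtain h | h : (#{i ∈ F | a i = w} = 1 ∧ #{i ∈ F | b i = w} = 0) ∨
      (#{i ∈ F | b i = w} = 1 ∧ #{i ∈ F | a i = w} = 0) := by omega
  · exact key a b h.1 h.2
  · obtain ⟨e₀, he₀, u, hu, hends, hleaf⟩ := key b a h.1 h.2
    refine ⟨e₀, he₀, u, hu, Sym2.eq_swap.trans hends, fun i hi hne => ?_⟩
    exact Sym2.eq_swap (a := a i) ▸ hleaf i hi hne

theorem eq_of_degree_eq_two {e₀ : E} (he₀ : e₀ ∈ F) (ha : a e₀ = w) (hb : b e₀ = w)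
    (h : degree a b F w = 2) : ∀ i ∈ F, a i = w ∨ b i = w → i = e₀ := by
  have hpos : ∀ p : E → V, p e₀ = w → 1 ≤ #{i ∈ F | p i = w} :=
    fun p hp => card_pos.2 ⟨e₀, mem_filter.2 ⟨he₀, hp⟩⟩
  have hle : ∀ p : E → V, p e₀ = w → #{i ∈ F | p i = w} ≤ 1 → ∀ i ∈ F, p i = w → i = e₀ :=
    fun p hp h1 i hi hpi => card_le_one.1 h1 i (mem_filter.2 ⟨hi, hpi⟩) e₀ (mem_filter.2 ⟨he₀, hp⟩)
  have ha1 := hpos a ha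
  have hb1 := hpos b hb
  unfold degree at h
  rintro i hi (hai | hbi)
  · exact hle a ha (by omega) i hi hai
  · exact hle b hb (by omega) i hi hbi

theorem not_isRigid_of_loops_fixing {τ : T} (hw : w ∈ S) (hwv₀ : w ≠ v₀) (hτ : τ ≠ 1)
    (hloops : ∀ i ∈ F, a i = w ∨ b i = w → a i = w ∧ b i = w ∧ β i τ = τ) :
    ¬ IsRigid a b β S F v₀ := by
  intro h
  have hsol : IsSolution a b β F (Pi.mulSingle w τ) := by
    intro i hi
    by_cases hab : a i = w ∨ b i = w
    · obtain ⟨ha, hb, hfix⟩ := hloops i hi hab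
      rw [ha, hb, Pi.mulSingle_eq_same, hfix]
    · push Not at hab
      rw [Pi.mulSingle_eq_of_ne hab.2, Pi.mulSingle_eq_of_ne hab.1, map_one]
  have := h _ (Pi.mulSingle_eq_of_ne hwv₀.symm τ) hsol w hw
  exact hτ (by rwa [Pi.mulSingle_eq_same] at this)

variable [DecidableEq E] {e₀ : E}

theorem IsRigid.erase_leaf {u : V} (h : IsRigid a b β S F v₀) (hwv₀ : w ≠ v₀)
    (hends : s(a e₀, b e₀) = s(w, u)) (huw : u ≠ w)
    (hleaf : ∀ i ∈ F, i ≠ e₀ → w ∉ s(a i, b i)) :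
    IsRigid a b β (S.erase w) (F.erase e₀) v₀ := by
  intro σ hσ₀ hσ v hv
  have hother : ∀ c, ∀ i ∈ F, i ≠ e₀ →
      update σ w c (b i) = β i (update σ w c (a i)) := by
    intro c i hi hne
    obtain ⟨ha, hb⟩ := not_or.1 (Sym2.mem_iff.not.1 (hleaf i hi hne))
    rw [update_of_ne (Ne.symm hb), update_of_ne (Ne.symm ha)]
    exact hσ i (mem_erase.2 ⟨hne, hi⟩)
  obtain ⟨c, hc⟩ : ∃ c, update σ w c (b e₀) = β e₀ (update σ w c (a e₀)) := by
    rcases Sym2.eq_iff.1 hends with ⟨ha, hb⟩ | ⟨ha, hb⟩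
    · refine ⟨(β e₀)⁻¹ (σ u), ?_⟩
      rw [ha, hb, update_self, update_of_ne huw, MulAut.apply_inv_self]
    · exact ⟨β e₀ (σ u), by rw [ha, hb, update_self, update_of_ne huw]⟩
  have hsol : IsSolution a b β F (update σ w c) := fun i hi =>
    if hne : i = e₀ then hne ▸ hc else hother c i hi hne
  have := h _ (by rwa [update_of_ne hwv₀.symm]) hsol v (mem_of_mem_erase hv)
  rwa [update_of_ne (ne_of_mem_erase hv)] at this

-- A solution `σ` of the system contracted along `e₀` lifts to `x ↦ γ x (σ (r x))`; the edge
-- automorphisms are twisted by `γ` to make this work.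
theorem IsRigid.contract (h : IsRigid a b β S F v₀) (hne : a e₀ ≠ b e₀) (hv₀ : v₀ ≠ b e₀) :
    IsRigid (update (id : V → V) (b e₀) (a e₀) ∘ a) (update (id : V → V) (b e₀) (a e₀) ∘ b)
      (fun i => (update (1 : V → MulAut T) (b e₀) (β e₀) (b i))⁻¹ * β i *
        update (1 : V → MulAut T) (b e₀) (β e₀) (a i))
      (S.erase (b e₀)) (F.erase e₀) v₀ := by
  set r : V → V := update id (b e₀) (a e₀)
  set γ : V → MulAut T := update 1 (b e₀) (β e₀)
  intro σ hσ₀ hσ v hv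
  have hsol : IsSolution a b β F (fun x => γ x (σ (r x))) := by
    intro i hi
    by_cases hie : i = e₀
    · subst hie
      simp [γ, r, hne]
    · have := hσ i (mem_erase.2 ⟨hie, hi⟩)
      simp only [comp_apply] at this
      simp only [this, MulAut.mul_apply, MulAut.apply_inv_self]
  have := h _ (by simp [γ, r, hv₀, hσ₀]) hsol v (mem_of_mem_erase hv)
  simpa [γ, r, ne_of_mem_erase hv] using this

theorem not_connected_contract (hab : ∀ i ∈ F, a i ∈ S ∧ b i ∈ S) (hv₀ : v₀ ∈ S)
    (hroot : ∀ i ∈ F, a i ≠ v₀ ∧ b i ≠ v₀) (he₀ : e₀ ∈ F) (hne : a e₀ ≠ b e₀) :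
    ¬ Multigraph.Connected
      (fun i => s((update (id : V → V) (b e₀) (a e₀) ∘ a) i, (update id (b e₀) (a e₀) ∘ b) i))
      (S.erase (b e₀)) (F.erase e₀) := by
  intro hconn
  obtain ⟨ha₀, hb₀⟩ := hroot e₀ he₀
  obtain ⟨i, hi, hv₀i⟩ := hconn.exists_mem_ends (mem_erase.2 ⟨hb₀.symm, hv₀⟩)
    (mem_erase.2 ⟨hne, (hab e₀ he₀).1⟩) ha₀.symm
  obtain ⟨hai, hbi⟩ := hroot i (mem_of_mem_erase hi)
  rcases Sym2.mem_iff.1 hv₀i with hv | hv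
  · exact hai (eq_of_update_id_eq hv.symm ha₀.symm)
  · exact hbi (eq_of_update_id_eq hv.symm ha₀.symm)

theorem IsRigid.exists_degree_eq_one {N : ℕ} (hT : ∀ φ : MulAut T, ∃ τ ≠ 1, φ τ = τ)
    (ih : ∀ (a b : E → V) (β : E → MulAut T) (S : Finset V) (F : Finset E), #F = N →
      #S = N + 1 → v₀ ∈ S → (∀ i ∈ F, a i ∈ S ∧ b i ∈ S) → IsRigid a b β S F v₀ →
      Multigraph.Connected (fun i => s(a i, b i)) S F)
    (h : IsRigid a b β S F v₀) (hF : #F = N + 1) (hS : #S = N + 1 + 1) (hv₀ : v₀ ∈ S)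
    (hab : ∀ i ∈ F, a i ∈ S ∧ b i ∈ S) : ∃ w ∈ S, w ≠ v₀ ∧ degree a b F w = 1 := by
  by_contra! hleaf
  have h2 : ∀ w ∈ S, w ≠ v₀ → 2 ≤ degree a b F w := by
    intro w hw hwv₀
    have h0 : degree a b F w ≠ 0 := fun h0 => by
      obtain ⟨τ, hτ, -⟩ := hT 1
      refine not_isRigid_of_loops_fixing hw hwv₀ hτ (fun i hi hi' => ?_) h
      exact absurd hi' (not_or.2 (degree_eq_zero_iff.1 h0 i hi))
    have := hleaf w hw hwv₀
    omega
  obtain ⟨hdeg₀, hdeg₂⟩ :=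
    eq_zero_and_eq_two_of_sum_eq hv₀ (by rw [sum_degree hab, hF, hS]; omega) h2
  have hroot := degree_eq_zero_iff.1 hdeg₀
  by_cases hloop : ∃ e₀ ∈ F, a e₀ ≠ b e₀
  · obtain ⟨e₀, he₀, hne⟩ := hloop
    have hb₀ := (hroot e₀ he₀).2
    refine not_connected_contract hab hv₀ hroot he₀ hne
      (ih _ _ _ _ _ ?_ ?_ (mem_erase.2 ⟨hb₀.symm, hv₀⟩) (fun i hi => ?_) (h.contract hne hb₀.symm))
    · rw [card_erase_of_mem he₀, hF]; rfl
    · rw [card_erase_of_mem (hab e₀ he₀).2, hS]; rfl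
    · have hi' := hab i (mem_of_mem_erase hi)
      exact ⟨update_id_mem_erase (hab e₀ he₀).1 hne hi'.1,
        update_id_mem_erase (hab e₀ he₀).1 hne hi'.2⟩
  · push Not at hloop
    obtain ⟨e₀, he₀⟩ : F.Nonempty := card_pos.1 (by omega)
    obtain ⟨τ, hτ, hfix⟩ := hT (β e₀)
    have hb₀ : b e₀ = a e₀ := (hloop e₀ he₀).symm
    have honly := eq_of_degree_eq_two he₀ rfl hb₀ (hdeg₂ _ (hab e₀ he₀).1 (hroot e₀ he₀).1)
    refine not_isRigid_of_loops_fixing (hab e₀ he₀).1 (hroot e₀ he₀).1 hτ (fun i hi hi' => ?_) h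
    obtain rfl := honly i hi hi'
    exact ⟨rfl, hb₀, hfix⟩

theorem isTree_of_isRigid (hT : ∀ φ : MulAut T, ∃ τ ≠ 1, φ τ = τ) (N : ℕ) :
    ∀ (a b : E → V) (β : E → MulAut T) (S : Finset V) (F : Finset E), #F = N → #S = N + 1 →
      v₀ ∈ S → (∀ i ∈ F, a i ∈ S ∧ b i ∈ S) → IsRigid a b β S F v₀ →
      Multigraph.IsTree (fun i => s(a i, b i)) S F := by
  induction N with
  | zero =>
    intro a b β S F hF hS hv₀ _ _
    obtain ⟨x, rfl⟩ := card_eq_one.1 hS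
    rw [card_eq_zero.1 hF]
    exact Multigraph.isTree_singleton x
  | succ N ih =>
    intro a b β S F hF hS hv₀ hab h
    obtain ⟨w, hw, hwv₀, hdeg⟩ := h.exists_degree_eq_one hT
      (fun a b β S F hF hS hv₀ hab h => (ih a b β S F hF hS hv₀ hab h).1) hF hS hv₀ hab
    obtain ⟨e₀, he₀, u, huw, hends, hleaf⟩ := exists_leaf_of_degree_eq_one hdeg
    have hu : u ∈ S := by
      have := Sym2.mem_mk_right w u
      rw [← hends, Sym2.mem_iff] at this
      rcases this with rfl | rfl
      exacts [(hab e₀ he₀).1, (hab e₀ he₀).2]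
    have hab' : ∀ i ∈ F.erase e₀, a i ∈ S.erase w ∧ b i ∈ S.erase w := by
      intro i hi
      obtain ⟨hne, hiF⟩ := mem_erase.1 hi
      obtain ⟨ha, hb⟩ := not_or.1 (Sym2.mem_iff.not.1 (hleaf i hiF hne))
      exact ⟨mem_erase.2 ⟨Ne.symm ha, (hab i hiF).1⟩, mem_erase.2 ⟨Ne.symm hb, (hab i hiF).2⟩⟩
    refine (ih a b β (S.erase w) (F.erase e₀) ?_ ?_ (mem_erase.2 ⟨hwv₀.symm, hv₀⟩) hab'
      (h.erase_leaf hwv₀ hends huw hleaf)).of_erase_leaf he₀ hends hu huw hleaf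
    · rw [card_erase_of_mem he₀, hF]; rfl
    · rw [card_erase_of_mem hw, hS]; rfl

end EdgeSystem

theorem End0Data.exists_mulAut {n : ℕ} {T : Type*} [Group T] {θ : Fin n → Option (Fin n)}
    {φ : Fin n → T →* T} {f : (Fin n → T) →* (Fin n → T)} (hf : End0Data θ φ f) :
    ∃ α : Fin n → MulAut T, ∀ σ : Option (Fin n) → T, σ none = 1 →
      ∀ i, f (fun j => σ (some j)) i = α i (σ (θ i)) := by
  classical
  refine ⟨fun i => if h : (θ i).isSome then MulEquiv.ofBijective (φ i) (hf.1 i h) else 1,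
    fun σ hσ i => ?_⟩
  rw [hf.2]
  rcases hθ : θ i with _ | j
  · simp [hσ]
  · simp [hθ]

theorem tree_of_fixed_point_free_general
    (n : ℕ) (T : Type*) [Group T]
    (hT : ¬ ∃ φ : MulAut T, ∀ σ : T, φ σ = σ ↔ σ = 1)
    (f g : (Fin n → T) →* (Fin n → T))
    (θf θg : Fin n → Option (Fin n)) (φf φg : Fin n → (T →* T))
    (hf : End0Data θf φf f) (hg : End0Data θg φg g)
    (hfpf : ∀ σ : Fin n → T, f σ = g σ ↔ σ = 1) :
    MGraph.IsTree fun i => s(θf i, θg i) := by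
  classical
  obtain ⟨αf, hαf⟩ := hf.exists_mulAut
  obtain ⟨αg, hαg⟩ := hg.exists_mulAut
  have hrigid : EdgeSystem.IsRigid θf θg (fun i => (αg i)⁻¹ * αf i) univ univ none := by
    intro σ hσ hsol v _
    have hfix : (fun j => σ (some j)) = 1 := (hfpf _).1 <| funext fun i => by
      rw [hαf σ hσ, hαg σ hσ, hsol i (mem_univ i), MulAut.mul_apply, MulAut.apply_inv_self]
    cases v with
    | none => exact hσ
    | some j => exact congrFun hfix j
  refine (EdgeSystem.isTree_of_isRigid (exists_fixed_ne_one hT) n θf θg _ univ univ (card_fin n)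
    ?_ (mem_univ none) (fun _ _ => ⟨mem_univ _, mem_univ _⟩) hrigid).mgraph_isTree
  simp

theorem tree_of_fixed_point_free
    (n : ℕ) (hn : 1 ≤ n) (T : Type*) [Group T] [Finite T] [Nontrivial T]
    (hT : ¬ ∃ φ : MulAut T, ∀ σ : T, φ σ = σ ↔ σ = 1)
    (f g : (Fin n → T) →* (Fin n → T))
    (θf θg : Fin n → Option (Fin n)) (φf φg : Fin n → (T →* T))
    (hf : End0Data θf φf f) (hg : End0Data θg φg g)
    (hfpf : ∀ σ : Fin n → T, f σ = g σ ↔ σ = 1) :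
    MGraph.IsTree fun i => s(θf i, θg i) :=
  tree_of_fixed_point_free_general n T hT f g θf θg φf φg hf hg hfpf
end

section
/- The number of pairs (f,g) ∈ End^0(G) × End^0(G) such that the multigraph Γ_{f,g} is a tree equals 2^n · n! · |Aut(T)|^n · (n·|Aut(T)| + 1)^(n−1). -/
/-
Since `T` is nontrivial, an element of `End⁰(G)` is the same thing as a choice, for every
coordinate `i`, of either nothing or a pair `(j, α)` with `α ∈ Aut(T)`, meaning `f x i = α (x j)`.
Root the tree `Γ_{f,g}` at `0`: every vertex `j ≠ 0` owns the unique edge leading from it towards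
the root. This gives a bijection `σ` from vertices to edges, a bit per edge saying whether `j` is
its `f`-end or its `g`-end, the automorphism at the `j`-end, and at the other end either `0` or the
parent of `j` together with its automorphism. The last datum is a rooted forest on `{1, …, n}`
whose edges are decorated by `Aut(T)`; a Prüfer-type code (repeatedly delete the least leaf and
record its decorated parent) shows that there are `(n |Aut(T)| + 1)^(n-1)` of them.
-/

namespace TreePairs

variable {n : ℕ} {β : Type*}

def IsAcyclic (p : Fin n → Option (Fin n)) : Prop :=
  ∃ d : Fin n → ℕ, ∀ j j', p j = some j' → d j' < d j

lemma IsAcyclic.ne_self {p : Fin n → Option (Fin n)} (h : IsAcyclic p) (j : Fin n) :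
    p j ≠ some j := by
  obtain ⟨d, hd⟩ := h
  exact fun hj => (hd j j hj).false

/-- `q j = some (i, b)`: the parent of `j` is `i`, along an edge decorated by `b`;
`q j = none`: `j` is a root (in the trees below, it hangs from the vertex `0`). -/
def parents (q : Fin n → Option (Fin n × β)) (j : Fin n) : Option (Fin n) :=
  (q j).map Prod.fst

section Pruefer

def parentSet (V : Finset (Fin n)) (q : Fin n → Option (Fin n × β)) : Finset (Fin n) :=
  V.biUnion fun j => (parents q j).toFinset

def IsForestOn (V : Finset (Fin n)) (q : Fin n → Option (Fin n × β)) : Prop :=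
  (∀ j ∉ V, q j = none) ∧ (∀ j j', parents q j = some j' → j' ∈ V) ∧ IsAcyclic (parents q)

def codeParents (c : List (Option (Fin n × β))) : Finset (Fin n) :=
  (c.filterMap fun e => e.map Prod.fst).toFinset

lemma mem_parentSet {V : Finset (Fin n)} {q : Fin n → Option (Fin n × β)} {a : Fin n} :
    a ∈ parentSet V q ↔ ∃ j ∈ V, parents q j = some a := by
  simp [parentSet]

lemma parentSet_erase_update (V : Finset (Fin n)) (q : Fin n → Option (Fin n × β)) (v : Fin n)
    (e : Option (Fin n × β)) :
    parentSet (V.erase v) (Function.update q v e) = parentSet (V.erase v) q :=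
  Finset.biUnion_congr rfl fun _ hj => by
    rw [parents, parents, Function.update_of_ne (Finset.ne_of_mem_erase hj)]

lemma parentSet_eq_union {V : Finset (Fin n)} {v : Fin n} (hv : v ∈ V)
    (q : Fin n → Option (Fin n × β)) :
    parentSet V q = (parents q v).toFinset ∪ parentSet (V.erase v) q := by
  rw [parentSet, ← Finset.insert_erase hv, Finset.biUnion_insert, Finset.erase_insert_eq_erase,
    Finset.erase_idem, parentSet]

@[simp]
lemma parentSet_none (V : Finset (Fin n)) :
    parentSet V (fun _ => (none : Option (Fin n × β))) = ∅ :=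
  Finset.eq_empty_of_forall_notMem fun a => by simp [mem_parentSet, parents]

lemma codeParents_cons (e : Option (Fin n × β)) (c : List (Option (Fin n × β))) :
    codeParents (e :: c) = (e.map Prod.fst).toFinset ∪ codeParents c := by
  ext a
  cases e <;> simp [codeParents, eq_comm]

lemma card_codeParents_le (c : List (Option (Fin n × β))) : (codeParents c).card ≤ c.length :=
  (List.toFinset_card_le _).trans (List.length_filterMap_le _ _)

namespace IsForestOn

variable {V : Finset (Fin n)} {q : Fin n → Option (Fin n × β)}

lemma exists_leaf (h : IsForestOn V q) (hV : V.Nonempty) : (V \ parentSet V q).Nonempty := by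
  obtain ⟨d, hd⟩ := h.2.2
  obtain ⟨v, hvV, hvmax⟩ := Finset.exists_max_image V d hV
  refine ⟨v, Finset.mem_sdiff.2 ⟨hvV, fun hv => ?_⟩⟩
  obtain ⟨j, hjV, hj⟩ := mem_parentSet.1 hv
  exact (hd j v hj).not_ge (hvmax j hjV)

lemma eq_none_of_card_le_one (h : IsForestOn V q) (hV : V.card ≤ 1) (j : Fin n) :
    q j = none := by
  by_contra hq
  obtain ⟨j', hj'⟩ : ∃ j', parents q j = some j' := by
    cases hqj : q j <;> simp_all [parents]
  obtain ⟨d, hd⟩ := h.2.2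
  have hne : j' ≠ j := fun e => (hd j j' hj').ne (by rw [e])
  have hjV : j ∈ V := by_contra fun hj => hq (h.1 j hj)
  exact hV.not_gt (Finset.one_lt_card.2 ⟨j', h.2.1 j j' hj', j, hjV, hne⟩)

lemma erase_leaf (h : IsForestOn V q) {v : Fin n} (hv : v ∉ parentSet V q) :
    IsForestOn (V.erase v) (Function.update q v none) := by
  obtain ⟨hsupp, hpar, d, hd⟩ := h
  have hparents : ∀ j j', parents (Function.update q v none) j = some j' →
      j ≠ v ∧ parents q j = some j' := by
    intro j j' hj
    rcases eq_or_ne j v with rfl | hjv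
    · simp [parents] at hj
    · simpa [parents, Function.update_of_ne hjv, hjv] using hj
  refine ⟨fun j hj => ?_, fun j j' hj => ?_, d, fun j j' hj => hd j j' (hparents j j' hj).2⟩
  · rcases eq_or_ne j v with rfl | hjv
    · simp
    · rw [Function.update_of_ne hjv]
      exact hsupp j fun hjV => hj (Finset.mem_erase.2 ⟨hjv, hjV⟩)
  · obtain ⟨-, hq⟩ := hparents j j' hj
    have hjV : j ∈ V := by_contra fun hjV => by simp [parents, hsupp j hjV] at hq
    refine Finset.mem_erase.2 ⟨?_, hpar j j' hq⟩
    rintro rfl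
    exact hv (mem_parentSet.2 ⟨j, hjV, hq⟩)

lemma attach_leaf {w : Fin n} (h : IsForestOn (V.erase w) q) (hw : w ∈ V)
    {e : Option (Fin n × β)} (he : ∀ j', e.map Prod.fst = some j' → j' ∈ V.erase w) :
    IsForestOn V (Function.update q w e) := by
  obtain ⟨hsupp, hpar, d, hd⟩ := h
  have hparents : ∀ j j', parents (Function.update q w e) j = some j' →
      j' ∈ V.erase w ∧ (j ≠ w → parents q j = some j') := by
    intro j j' hj
    rcases eq_or_ne j w with rfl | hjw
    · exact ⟨he j' (by simpa [parents] using hj), fun h => (h rfl).elim⟩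
    · have hq : parents q j = some j' := by simpa [parents, Function.update_of_ne hjw] using hj
      exact ⟨hpar j j' hq, fun _ => hq⟩
  refine ⟨fun j hj => ?_, fun j j' hj => Finset.mem_of_mem_erase (hparents j j' hj).1,
    fun j => if j = w then Finset.univ.sup d + 1 else d j, fun j j' hj => ?_⟩
  · have hjw : j ≠ w := by rintro rfl; exact hj hw
    rw [Function.update_of_ne hjw]
    exact hsupp j fun hjV => hj (Finset.mem_of_mem_erase hjV)
  · obtain ⟨hj'V, hjq⟩ := hparents j j' hj
    simp only [if_neg (Finset.ne_of_mem_erase hj'V)]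
    split_ifs with hjw
    · exact Nat.lt_succ_of_le (Finset.le_sup (Finset.mem_univ j'))
    · exact hd j j' (hjq hjw)

end IsForestOn

lemma isForestOn_univ {q : Fin n → Option (Fin n × β)} (h : IsAcyclic (parents q)) :
    IsForestOn Finset.univ q :=
  ⟨by simp, by simp, h⟩

variable [NeZero n]

def pick (S : Finset (Fin n)) : Fin n :=
  S.min.untopD 0

lemma pick_mem {S : Finset (Fin n)} (h : S.Nonempty) : pick S ∈ S := by
  obtain ⟨a, ha⟩ := Finset.min_of_nonempty h
  rw [pick, ha, WithTop.untopD_coe]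
  exact Finset.mem_of_min ha

def encode : ℕ → Finset (Fin n) → (Fin n → Option (Fin n × β)) → List (Option (Fin n × β))
  | 0, _, _ => []
  | k + 1, V, q =>
    let v := pick (V \ parentSet V q)
    q v :: encode k (V.erase v) (Function.update q v none)

def decode : Finset (Fin n) → List (Option (Fin n × β)) → Fin n → Option (Fin n × β)
  | _, [] => fun _ => none
  | V, e :: c =>
    let w := pick (V \ codeParents (e :: c))
    Function.update (decode (V.erase w) c) w e

@[simp]
lemma length_encode (k : ℕ) (V : Finset (Fin n)) (q : Fin n → Option (Fin n × β)) :
    (encode k V q).length = k := by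
  induction k generalizing V q with
  | zero => rfl
  | succ k ih => simp [encode, ih]

lemma IsForestOn.encode_spec {k : ℕ} {V : Finset (Fin n)} {q : Fin n → Option (Fin n × β)}
    (h : IsForestOn V q) (hV : V.card = k + 1) :
    codeParents (encode k V q) = parentSet V q ∧ decode V (encode k V q) = q := by
  induction k generalizing V q with
  | zero =>
    obtain rfl : q = fun _ => none := funext (h.eq_none_of_card_le_one hV.le)
    simp [encode, decode, codeParents]
  | succ k ih =>
    have hleaf := pick_mem (h.exists_leaf (Finset.card_pos.1 (by omega)))
    obtain ⟨hvV, hvP⟩ := Finset.mem_sdiff.1 hleaf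
    set v := pick (V \ parentSet V q)
    obtain ⟨ihc, ihd⟩ := ih (h.erase_leaf hvP) (by rw [Finset.card_erase_of_mem hvV, hV]; rfl)
    have hcode : codeParents (q v :: encode k (V.erase v) (Function.update q v none)) =
        parentSet V q := by
      rw [codeParents_cons, ihc, parentSet_erase_update]
      exact (parentSet_eq_union hvV q).symm
    refine ⟨hcode, ?_⟩
    change decode V (q v :: _) = q
    rw [decode, hcode]
    change Function.update (decode (V.erase v) _) v (q v) = q
    rw [ihd, Function.update_idem, Function.update_eq_self]

lemma decode_spec {V : Finset (Fin n)} (c : List (Option (Fin n × β)))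
    (hc : codeParents c ⊆ V) (hV : V.card = c.length + 1) :
    IsForestOn V (decode V c) ∧ parentSet V (decode V c) = codeParents c ∧
      encode c.length V (decode V c) = c := by
  induction c generalizing V with
  | nil =>
    refine ⟨⟨fun _ _ => rfl, fun j j' h => ?_, fun _ => 0, fun j j' h => ?_⟩, ?_, rfl⟩ <;>
      simp_all [decode, parents, codeParents]
  | cons e c ih =>
    have hne : (V \ codeParents (e :: c)).Nonempty := by
      refine Finset.sdiff_nonempty.2 fun hsub => ?_
      have := (Finset.card_le_card hsub).trans (card_codeParents_le (e :: c))
      simp only [hV, List.length_cons] at this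
      omega
    obtain ⟨hwV, hwc⟩ := Finset.mem_sdiff.1 (pick_mem hne)
    set w := pick (V \ codeParents (e :: c)) with hw
    rw [codeParents_cons, Finset.mem_union, not_or] at hwc
    rw [codeParents_cons, Finset.union_subset_iff] at hc
    have hc' : codeParents c ⊆ V.erase w := fun a ha =>
      Finset.mem_erase.2 ⟨by rintro rfl; exact hwc.2 ha, hc.2 ha⟩
    obtain ⟨hF, hpar, henc⟩ :=
      ih hc' (by rw [Finset.card_erase_of_mem hwV, hV, List.length_cons]; rfl)
    set q := decode (V.erase w) c
    have hdec : decode V (e :: c) = Function.update q w e := rfl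
    have he : ∀ j', e.map Prod.fst = some j' → j' ∈ V.erase w := fun j' hj' =>
      Finset.mem_erase.2 ⟨by rintro rfl; simp [hj'] at hwc, hc.1 (by simp [hj'])⟩
    have hpar' : parentSet V (Function.update q w e) = codeParents (e :: c) := by
      rw [parentSet_eq_union hwV, parentSet_erase_update, hpar, codeParents_cons]
      simp [parents]
    have hqw : q w = none := hF.1 w (Finset.notMem_erase w V)
    refine ⟨hdec ▸ hF.attach_leaf hwV he, hdec ▸ hpar', ?_⟩
    rw [hdec, List.length_cons, encode]
    simp only [hpar', ← hw, Function.update_self, Function.update_idem]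
    rw [← hqw, Function.update_eq_self, henc]

def pruferEquiv :
    {q : Fin n → Option (Fin n × β) // IsAcyclic (parents q)} ≃
      List.Vector (Option (Fin n × β)) (n - 1) where
  toFun q := ⟨encode (n - 1) Finset.univ q.1, length_encode _ _ _⟩
  invFun c := ⟨decode Finset.univ c.1,
    (decode_spec c.1 (Finset.subset_univ _) (by simp [c.2, NeZero.one_le])).1.2.2⟩
  left_inv q := Subtype.ext
    ((isForestOn_univ q.2).encode_spec (by simp [NeZero.one_le])).2
  right_inv c := Subtype.ext <| by
    simpa [c.2] using (decode_spec c.1 (Finset.subset_univ _) (by simp [c.2, NeZero.one_le])).2.2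

end Pruefer

theorem card_acyclic (n : ℕ) (β : Type*) [Finite β] :
    Nat.card {q : Fin n → Option (Fin n × β) // IsAcyclic (parents q)} =
      (n * Nat.card β + 1) ^ (n - 1) := by
  rcases Nat.eq_zero_or_pos n with rfl | hn
  · have : Unique {q : Fin 0 → Option (Fin 0 × β) // IsAcyclic (parents q)} :=
      ⟨⟨⟨finZeroElim, fun _ => 0, finZeroElim⟩⟩, fun _ => Subtype.ext (funext finZeroElim)⟩
    simp
  · have : NeZero n := ⟨hn.ne'⟩
    rw [Nat.card_congr (pruferEquiv.trans (Equiv.vectorEquivFin _ _)), Nat.card_fun]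
    simp [Finite.card_option, Nat.card_prod]

section Spine

variable (ends : Fin n → Sym2 (Option (Fin n)))

structure IsSpine (σ : Equiv.Perm (Fin n)) (p : Fin n → Option (Fin n)) : Prop where
  ends_eq : ∀ j, ends (σ j) = s(some j, p j)
  acyclic : IsAcyclic p

def WalkToRoot : ℕ → Option (Fin n) → Prop
  | 0, v => v = none
  | m + 1, v => ∃ w, MGraph.Adj ends v w ∧ WalkToRoot m w

noncomputable def rootDist (v : Option (Fin n)) : ℕ :=
  sInf {m | WalkToRoot ends m v}

variable {ends}

instance : Std.Symm (MGraph.Adj ends) :=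
  ⟨fun _ _ ⟨i, hi⟩ => ⟨i, hi.trans Sym2.eq_swap⟩⟩

lemma exists_walkToRoot {v : Option (Fin n)} (h : MGraph.Reach ends v none) :
    ∃ m, WalkToRoot ends m v := by
  induction h using Relation.ReflTransGen.head_induction_on with
  | refl => exact ⟨0, rfl⟩
  | head hadj _ ih =>
    obtain ⟨m, hm⟩ := ih
    exact ⟨m + 1, _, hadj, hm⟩

lemma walkToRoot_rootDist (hc : MGraph.Connected ends) (v : Option (Fin n)) :
    WalkToRoot ends (rootDist ends v) v :=
  Nat.sInf_mem (exists_walkToRoot (hc v none))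

lemma exists_adj_rootDist_lt (hc : MGraph.Connected ends) (j : Fin n) :
    ∃ i w, ends i = s(some j, w) ∧ rootDist ends w < rootDist ends (some j) := by
  have hwalk := walkToRoot_rootDist hc (some j)
  cases hD : rootDist ends (some j) with
  | zero => simp [hD, WalkToRoot] at hwalk
  | succ m =>
    rw [hD] at hwalk
    obtain ⟨w, ⟨i, hi⟩, hw⟩ := hwalk
    exact ⟨i, w, hi, Nat.lt_succ_of_le (Nat.sInf_le hw)⟩

namespace IsSpine

variable {σ : Equiv.Perm (Fin n)} {p : Fin n → Option (Fin n)}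

lemma connected (h : IsSpine ends σ p) : MGraph.Connected ends := by
  obtain ⟨d, hd⟩ := h.acyclic
  have hroot : ∀ j, MGraph.Reach ends (some j) none := by
    intro j
    induction hdj : d j using Nat.strong_induction_on generalizing j with
    | _ t ih =>
      refine Relation.ReflTransGen.head ⟨σ j, h.ends_eq j⟩ ?_
      cases hp : p j with
      | none => exact Relation.ReflTransGen.refl
      | some j' => exact ih (d j') (hdj ▸ hd j j' hp) j' rfl
  have hreach : ∀ v, MGraph.Reach ends v none
    | none => Relation.ReflTransGen.refl
    | some j => hroot j
  exact fun a b => (hreach a).trans (Std.Symm.symm _ _ (hreach b))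

lemma rootDist_lt (h : IsSpine ends σ p) (j : Fin n) :
    rootDist ends (p j) < rootDist ends (some j) := by
  induction hj : rootDist ends (some j) using Nat.strong_induction_on generalizing j with
  | _ t ih =>
    obtain ⟨i, w, hi, hw⟩ := exists_adj_rootDist_lt h.connected j
    rw [← σ.apply_symm_apply i, h.ends_eq] at hi
    rcases Sym2.eq_iff.1 hi with ⟨hj', rfl⟩ | ⟨rfl, hp⟩
    · obtain rfl := Option.some_injective _ hj'
      exact hj ▸ hw
    · have := ih _ (hj ▸ hw) (σ.symm i) rfl
      rw [hp] at this
      omega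

lemma child_of_rootDist_le (h : IsSpine ends σ p) {i : Fin n} {u w : Option (Fin n)}
    (hi : ends i = s(u, w)) (hle : rootDist ends w ≤ rootDist ends u) :
    u = some (σ.symm i) ∧ rootDist ends w < rootDist ends u := by
  have hlt := h.rootDist_lt (σ.symm i)
  rw [← σ.apply_symm_apply i, h.ends_eq] at hi
  rcases Sym2.eq_iff.1 hi with ⟨rfl, rfl⟩ | ⟨rfl, rfl⟩
  · exact ⟨rfl, hlt⟩
  · omega

lemma not_hasCycle (h : IsSpine ends σ p) : ¬ MGraph.HasCycle ends := by
  rintro ⟨m, e, v, he, -, hev⟩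
  obtain ⟨k, -, hk⟩ := Finset.exists_max_image Finset.univ (fun k => rootDist ends (v k))
    ⟨0, Finset.mem_univ 0⟩
  have hprev : ends (e (k - 1)) = s(v k, v (k - 1)) := by
    rw [hev, sub_add_cancel, Sym2.eq_swap]
  obtain ⟨hchild, hlt⟩ := h.child_of_rootDist_le hprev (hk _ (Finset.mem_univ _))
  obtain ⟨hchild', -⟩ := h.child_of_rootDist_le (hev k) (hk _ (Finset.mem_univ _))
  have hkk : k - 1 = k :=
    he (σ.symm.injective (Option.some_injective _ (hchild.symm.trans hchild')))
  rw [hkk] at hlt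
  exact hlt.false

lemma isTree (h : IsSpine ends σ p) : MGraph.IsTree ends :=
  ⟨h.connected, h.not_hasCycle⟩

lemma perm_eq {σ' : Equiv.Perm (Fin n)} {p' : Fin n → Option (Fin n)} (h : IsSpine ends σ p)
    (h' : IsSpine ends σ' p') : σ = σ' :=
  Equiv.ext fun j => (σ.symm_apply_eq.1 (Option.some_injective _
    (h.child_of_rootDist_le (h'.ends_eq j) (h'.rootDist_lt j).le).1).symm).symm

end IsSpine

lemma exists_isSpine_of_connected (hc : MGraph.Connected ends) :
    ∃ σ p, IsSpine ends σ p := by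
  choose σ p hends hlt using exists_adj_rootDist_lt hc
  have hinj : Function.Injective σ := by
    intro j j' hjj
    have hs : s(some j, p j) = s(some j', p j') := by rw [← hends, ← hends, hjj]
    rcases Sym2.eq_iff.1 hs with ⟨h, -⟩ | ⟨h, h'⟩
    · exact Option.some_injective _ h
    · have h1 := hlt j
      have h2 := hlt j'
      rw [h'] at h1
      rw [← h] at h2
      omega
  refine ⟨Equiv.ofBijective σ (Finite.injective_iff_bijective.1 hinj), p, hends,
    fun j => rootDist ends (some j), fun j j' hp => ?_⟩
  simpa [hp] using hlt j

end Spine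

section DecoratedTrees

def orient {α : Type*} (b : Bool) (u w : α) : α × α :=
  cond b (u, w) (w, u)

lemma orient_map_ends {α γ : Type*} (f : α → γ) (b : Bool) (u w : α) :
    s(f (orient b u w).1, f (orient b u w).2) = s(f u, f w) := by
  cases b <;> simp [orient, Sym2.eq_swap]

lemma eq_of_orient_eq {α : Type*} {b b' : Bool} {u w u' w' : α} (hu : u ≠ w')
    (h : orient b u w = orient b' u' w') : b = b' ∧ u = u' ∧ w = w' := by
  cases b <;> cases b' <;> simp_all [orient]

lemma exists_orient_eq {j : Fin n} {p : Option (Fin n)} {y z : Option (Fin n × β)}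
    (h : s(y.map Prod.fst, z.map Prod.fst) = s(some j, p)) :
    ∃ b a x, x.map Prod.fst = p ∧ orient b (some (j, a)) x = (y, z) := by
  rcases Sym2.eq_iff.1 h with ⟨hy, hz⟩ | ⟨hy, hz⟩
  · obtain ⟨⟨_, a⟩, rfl, rfl⟩ := Option.map_eq_some_iff.1 hy
    exact ⟨true, a, z, hz, rfl⟩
  · obtain ⟨⟨_, a⟩, rfl, rfl⟩ := Option.map_eq_some_iff.1 hz
    exact ⟨false, a, y, hy, rfl⟩

def edgeEnds (c : Fin n → Option (Fin n × β) × Option (Fin n × β)) :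
    Fin n → Sym2 (Option (Fin n)) :=
  fun i => s((c i).1.map Prod.fst, (c i).2.map Prod.fst)

abbrev TreeCode (n : ℕ) (β : Type*) :=
  (Fin n → Bool) × Equiv.Perm (Fin n) × (Fin n → β) ×
    {q : Fin n → Option (Fin n × β) // IsAcyclic (parents q)}

/-- Vertex `j` owns the edge `σ j`, joining `some j` to its parent; `o j` says whether `some j`
is the `f`-end of that edge, and `a j` is the automorphism sitting at that end. -/
def assemble : TreeCode n β → Fin n → Option (Fin n × β) × Option (Fin n × β)
  | (o, σ, a, q), i => orient (o (σ.symm i)) (some (σ.symm i, a (σ.symm i))) (q.1 (σ.symm i))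

@[simp]
lemma assemble_apply_perm (o : Fin n → Bool) (σ : Equiv.Perm (Fin n)) (a : Fin n → β)
    (q : {q : Fin n → Option (Fin n × β) // IsAcyclic (parents q)}) (j : Fin n) :
    assemble (o, σ, a, q) (σ j) = orient (o j) (some (j, a j)) (q.1 j) := by
  simp [assemble]

lemma isSpine_assemble (s : TreeCode n β) :
    IsSpine (edgeEnds (assemble s)) s.2.1 (parents s.2.2.2.1) := by
  obtain ⟨o, σ, a, q, hq⟩ := s
  exact ⟨fun j => by simp only [edgeEnds, assemble_apply_perm, orient_map_ends]; rfl, hq⟩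

lemma assemble_injective : Function.Injective (assemble (n := n) (β := β)) := by
  rintro ⟨o, σ, a, q, hq⟩ ⟨o', σ', a', q', hq'⟩ h
  obtain rfl : σ = σ' := (h ▸ isSpine_assemble _).perm_eq (isSpine_assemble _)
  have hchild : ∀ {q : Fin n → Option (Fin n × β)}, IsAcyclic (parents q) →
      ∀ j (b : β), some (j, b) ≠ q j :=
    fun hq j b h => hq.ne_self j (by simp [parents, ← h])
  have key := fun j => eq_of_orient_eq (hchild hq' j (a j)) (by simpa using congrFun h (σ j))
  simp only [Prod.mk.injEq, Option.some.injEq, true_and] at key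
  simp only [Prod.mk.injEq, Subtype.mk.injEq, true_and]
  exact ⟨funext fun j => (key j).1, funext fun j => (key j).2.1, funext fun j => (key j).2.2⟩

lemma exists_assemble_eq {c : Fin n → Option (Fin n × β) × Option (Fin n × β)}
    (hc : MGraph.IsTree (edgeEnds c)) : ∃ s, assemble s = c := by
  obtain ⟨σ, p, hends, hp⟩ := exists_isSpine_of_connected hc.1
  choose o a q hq hqc using fun j => exists_orient_eq (hends j)
  have hpar : parents q = p := funext hq
  refine ⟨(o, σ, a, ⟨q, hpar ▸ hp⟩), funext fun i => ?_⟩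
  obtain ⟨j, rfl⟩ := σ.surjective i
  rw [assemble_apply_perm, hqc]

noncomputable def treeCodeEquiv :
    TreeCode n β ≃
      {c : Fin n → Option (Fin n × β) × Option (Fin n × β) // MGraph.IsTree (edgeEnds c)} :=
  Equiv.ofBijective (fun s => ⟨assemble s, (isSpine_assemble s).isTree⟩)
    ⟨fun _ _ h => assemble_injective (congrArg Subtype.val h),
      fun c => (exists_assemble_eq c.2).imp fun _ h => Subtype.ext h⟩

lemma card_treeCode [Finite β] :
    Nat.card (TreeCode n β) =
      2 ^ n * n.factorial * Nat.card β ^ n * (n * Nat.card β + 1) ^ (n - 1) := by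
  simp only [Nat.card_prod, Nat.card_fun, Nat.card_perm, card_acyclic, Nat.card_fin]
  simp only [Nat.card_eq_fintype_card, Fintype.card_bool]
  ring

end DecoratedTrees

section End0

variable {T : Type*} [Group T]

def mkHom (c : Fin n → Option (Fin n × MulAut T)) : (Fin n → T) →* (Fin n → T) :=
  MonoidHom.pi fun i => (c i).elim 1 fun ja => (ja.2 : T →* T).comp (Pi.evalMonoidHom _ ja.1)

lemma mkHom_apply (c : Fin n → Option (Fin n × MulAut T)) (x : Fin n → T) (i : Fin n) :
    mkHom c x i = (c i).elim 1 fun ja => ja.2 (x ja.1) := by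
  change ((c i).elim (1 : (Fin n → T) →* T) fun ja =>
    (ja.2 : T →* T).comp (Pi.evalMonoidHom (fun _ => T) ja.1)) x = _
  rcases c i with _ | ⟨j, a⟩ <;> rfl

lemma end0Data_mkHom (c : Fin n → Option (Fin n × MulAut T)) :
    End0Data (fun i => (c i).map Prod.fst) (fun i => (c i).elim 1 fun ja => (ja.2 : T →* T))
      (mkHom c) := by
  refine ⟨fun i hi => ?_, fun x i => ?_⟩
  · rcases hc : c i with _ | ⟨j, a⟩
    · simp [hc] at hi
    · simpa [hc] using a.bijective
  · rw [mkHom_apply]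
    rcases hc : c i with _ | ⟨j, a⟩ <;> simp [hc]

lemma End0Data.exists_eq_mkHom {θ : Fin n → Option (Fin n)} {φ : Fin n → (T →* T)}
    {f : (Fin n → T) →* (Fin n → T)} (h : End0Data θ φ f) :
    ∃ c : Fin n → Option (Fin n × MulAut T), (fun i => (c i).map Prod.fst) = θ ∧ mkHom c = f := by
  have hcoord : ∀ i, ∃ ci : Option (Fin n × MulAut T), ci.map Prod.fst = θ i ∧
      ∀ x : Fin n → T, (ci.elim 1 fun ja => ja.2 (x ja.1)) = (θ i).elim 1 fun j => φ i (x j) := by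
    intro i
    rcases hθ : θ i with _ | j
    · exact ⟨none, rfl, fun _ => rfl⟩
    · exact ⟨some (j, MulEquiv.ofBijective (φ i) (h.1 i (by simp [hθ]))), rfl, fun _ => rfl⟩
  choose c hcθ hcf using hcoord
  refine ⟨c, funext hcθ, MonoidHom.ext fun x => funext fun i => ?_⟩
  rw [mkHom_apply, hcf, h.2]

lemma mkHom_injective [Nontrivial T] : Function.Injective (mkHom (n := n) (T := T)) := by
  intro c c' h
  obtain ⟨t, ht⟩ := exists_ne (1 : T)
  funext i
  have hsingle : ∀ j u, mkHom c (Pi.mulSingle j u) i = mkHom c' (Pi.mulSingle j u) i :=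
    fun j u => by rw [h]
  simp only [mkHom_apply] at hsingle
  rcases hc : c i with _ | ⟨j, a⟩ <;> rcases hc' : c' i with _ | ⟨j', a'⟩
  · rfl
  · have h1 : 1 = a' t := by simpa [hc, hc'] using hsingle j' t
    exact (ht (a'.map_eq_one_iff.1 h1.symm)).elim
  · exact (ht (by simpa [hc, hc'] using hsingle j t)).elim
  · obtain rfl : j = j' := by
      by_contra hne
      exact ht (by simpa [hc, hc', Pi.mulSingle_eq_of_ne' hne] using hsingle j t)
    have : a = a' := MulEquiv.ext fun u => by simpa [hc, hc'] using hsingle j u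
    rw [this]

theorem card_end0_pairs [Nontrivial T] (P : (Fin n → Sym2 (Option (Fin n))) → Prop) :
    Nat.card {fg : ((Fin n → T) →* (Fin n → T)) × ((Fin n → T) →* (Fin n → T)) //
        ∃ (θf θg : Fin n → Option (Fin n)) (φf φg : Fin n → (T →* T)),
          End0Data θf φf fg.1 ∧ End0Data θg φg fg.2 ∧ P fun i => s(θf i, θg i)} =
      Nat.card {c : Fin n → Option (Fin n × MulAut T) × Option (Fin n × MulAut T) //
        P (edgeEnds c)} := by
  refine (Nat.card_congr (Equiv.ofBijective
    (fun c => ⟨(mkHom fun i => (c.1 i).1, mkHom fun i => (c.1 i).2),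
      _, _, _, _, end0Data_mkHom _, end0Data_mkHom _, c.2⟩) ⟨?_, ?_⟩)).symm
  · intro c c' h
    have h1 := mkHom_injective (congrArg (·.1.1) h)
    have h2 := mkHom_injective (congrArg (·.1.2) h)
    exact Subtype.ext (funext fun i => Prod.ext (congrFun h1 i) (congrFun h2 i))
  · rintro ⟨⟨f, g⟩, θf, θg, φf, φg, hf, hg, hP⟩
    obtain ⟨cf, rfl, rfl⟩ := End0Data.exists_eq_mkHom hf
    obtain ⟨cg, rfl, rfl⟩ := End0Data.exists_eq_mkHom hg
    exact ⟨⟨fun i => (cf i, cg i), hP⟩, rfl⟩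

end End0

end TreePairs

theorem count_tree_pairs_general
    (n : ℕ) (T : Type*) [Group T] [Finite T] [Nontrivial T] :
    Nat.card {fg : ((Fin n → T) →* (Fin n → T)) × ((Fin n → T) →* (Fin n → T)) //
        ∃ (θf θg : Fin n → Option (Fin n)) (φf φg : Fin n → (T →* T)),
          End0Data θf φf fg.1 ∧ End0Data θg φg fg.2 ∧
          MGraph.IsTree fun i => s(θf i, θg i)} =
      2 ^ n * Nat.factorial n * Nat.card (MulAut T) ^ n *
        (n * Nat.card (MulAut T) + 1) ^ (n - 1) := by
  rw [TreePairs.card_end0_pairs MGraph.IsTree, ← Nat.card_congr TreePairs.treeCodeEquiv,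
    TreePairs.card_treeCode]

theorem count_tree_pairs
    (n : ℕ) (hn : 1 ≤ n) (T : Type*) [Group T] [Finite T] [Nontrivial T] :
    Nat.card {fg : ((Fin n → T) →* (Fin n → T)) × ((Fin n → T) →* (Fin n → T)) //
        ∃ (θf θg : Fin n → Option (Fin n)) (φf φg : Fin n → (T →* T)),
          End0Data θf φf fg.1 ∧ End0Data θg φg fg.2 ∧
          MGraph.IsTree fun i => s(θf i, θg i)} =
      2 ^ n * Nat.factorial n * Nat.card (MulAut T) ^ n *
        (n * Nat.card (MulAut T) + 1) ^ (n - 1) :=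
  count_tree_pairs_general n T
end

section
/- Let f, g ∈ End^0(G) and let σ = (σ^(1),…,σ^(n)) ∈ G, with the convention σ^(0) = 1. Then f(σ) = g(σ) if and only if σ^(h(p)) = γ_p(σ^(t(p))) holds for every directed path p in the directed multigraph Γ_{(f,g)}, where t(p) and h(p) denote the tail and head of p respectively. -/
/-!
STATEMENT 10: Let `f, g ∈ End⁰(G)` and `σ = (σ⁽¹⁾, …, σ⁽ⁿ⁾) ∈ G`, with the
convention `σ⁽⁰⁾ = 1`.  Then `f(σ) = g(σ)` iff `σ^(h(p)) = γ_p(σ^(t(p)))`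
for every directed path `p` in the directed multigraph `Γ_{(f,g)}`.

Setting: `n ≥ 1`, `T` a nontrivial finite group, `G = Tⁿ = (Fin n → T)`.
The vertex set `{0, 1, …, n}` is modelled by `Option (Fin n)` with `none`
playing the role of `0`.  `Γ_{(f,g)}` has, for each `i`, one arrow `aᵢ` from
`θ_f(i)` to `θ_g(i)` whenever `θ_g(i) ≠ 0` (carrying `γ = φ_{g,i}⁻¹ ∘ φ_{f,i}`)
and one arrow `bᵢ` from `θ_g(i)` to `θ_f(i)` whenever `θ_f(i) ≠ 0` (carrying
`γ = φ_{f,i}⁻¹ ∘ φ_{g,i}`).  Arrows are encoded as pairs `(i, b) : Fin n × Bool`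
with `b = true` for `aᵢ` and `b = false` for `bᵢ`; the inverses are taken via
`Function.invFun`, which is the genuine inverse since the relevant `φ`'s are
bijective.  A directed path of length `m + 1` is a sequence of `m + 1` valid
arrows in which the head of each arrow is the tail of the next; `γ_p` is the
right-to-left composite of the arrow maps (the first arrow applied first).
-/

/-- The arrow `(i, b)` exists in `Γ_{(f,g)}`. -/
def arrowValid {n : ℕ} (θf θg : Fin n → Option (Fin n)) (c : Fin n × Bool) : Prop :=
  if c.2 then (θg c.1).isSome else (θf c.1).isSome

/-- The tail of the arrow `(i, b)`. -/
def arrowTail {n : ℕ} (θf θg : Fin n → Option (Fin n)) (c : Fin n × Bool) :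
    Option (Fin n) :=
  if c.2 then θf c.1 else θg c.1

/-- The head of the arrow `(i, b)`. -/
def arrowHead {n : ℕ} (θf θg : Fin n → Option (Fin n)) (c : Fin n × Bool) :
    Option (Fin n) :=
  if c.2 then θg c.1 else θf c.1

/-- The homomorphism γ carried by the arrow `(i, b)`, as a function `T → T`. -/
noncomputable def arrowMap {n : ℕ} {T : Type*} [Group T] (φf φg : Fin n → (T →* T))
    (c : Fin n × Bool) : T → T :=
  if c.2 then Function.invFun (φg c.1) ∘ (φf c.1)
  else Function.invFun (φf c.1) ∘ (φg c.1)

/-- `c` lists the consecutive arrows of a directed path of length `m + 1`. -/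
def IsDirectedPath {n : ℕ} (θf θg : Fin n → Option (Fin n)) (m : ℕ)
    (c : Fin (m + 1) → Fin n × Bool) : Prop :=
  (∀ k, arrowValid θf θg (c k)) ∧
    ∀ k : Fin m, arrowHead θf θg (c k.castSucc) = arrowTail θf θg (c k.succ)

/-- `γ_p` for the path `p` with arrows `c 0, …, c m` (applied in this order). -/
noncomputable def pathMap {n : ℕ} {T : Type*} [Group T] (φf φg : Fin n → (T →* T)) (m : ℕ)
    (c : Fin (m + 1) → Fin n × Bool) : T → T := fun x =>
  (List.ofFn fun k : Fin (m + 1) => arrowMap φf φg (c k)).foldl (fun y h => h y) x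

/-- `σ⁽ᵛ⁾` for a vertex `v ∈ {0, 1, …, n}`, with `σ⁽⁰⁾ = 1`. -/
def coord {n : ℕ} {T : Type*} [Group T] (σ : Fin n → T) (v : Option (Fin n)) : T :=
  v.elim 1 σ

section Aux
variable {n : ℕ} {T : Type*} [Group T]

lemma coord_map_eq (σ : Fin n → T) (φ : T →* T) (v : Option (Fin n)) :
    (v.elim 1 fun j => φ (σ j)) = φ (coord σ v) := by
  cases v <;> simp [coord]

lemma single_arrow {θf θg : Fin n → Option (Fin n)} {φf φg : Fin n → (T →* T)}
    {f g : (Fin n → T) →* (Fin n → T)}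
    (hf : End0Data θf φf f) (hg : End0Data θg φg g) (σ : Fin n → T)
    (hfg : f σ = g σ) (c : Fin n × Bool) (hv : arrowValid θf θg c) :
    coord σ (arrowHead θf θg c) = arrowMap φf φg c (coord σ (arrowTail θf θg c)) := by
  obtain ⟨i, b⟩ := c
  have hfi : f σ i = φf i (coord σ (θf i)) := by rw [hf.2]; exact coord_map_eq σ (φf i) (θf i)
  have hgi : g σ i = φg i (coord σ (θg i)) := by rw [hg.2]; exact coord_map_eq σ (φg i) (θg i)
  have h : φf i (coord σ (θf i)) = φg i (coord σ (θg i)) := by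
    rw [← hfi, ← hgi, hfg]
  cases b with
  | true =>
    simp only [arrowValid, if_true] at hv
    have hbij := hg.1 i hv
    simp only [arrowHead, arrowTail, arrowMap, if_true, Function.comp_apply]
    rw [h]
    exact (Function.leftInverse_invFun hbij.1 _).symm
  | false =>
    simp only [arrowValid, if_false, Bool.false_eq_true, if_neg] at hv
    have hbij := hf.1 i hv
    simp only [arrowHead, arrowTail, arrowMap, Bool.false_eq_true, if_neg,
      Function.comp_apply, if_false]
    rw [← h]
    exact (Function.leftInverse_invFun hbij.1 _).symm

lemma pathMap_zero (φf φg : Fin n → (T →* T)) (c : Fin 1 → Fin n × Bool) (x : T) :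
    pathMap φf φg 0 c x = arrowMap φf φg (c 0) x := by
  simp [pathMap, List.ofFn_succ]

lemma pathMap_succ (φf φg : Fin n → (T →* T)) (m : ℕ)
    (c : Fin (m + 2) → Fin n × Bool) (x : T) :
    pathMap φf φg (m + 1) c x =
      arrowMap φf φg (c (Fin.last (m + 1)))
        (pathMap φf φg m (fun k => c k.castSucc) x) := by
  unfold pathMap
  rw [List.ofFn_succ', List.concat_eq_append, List.foldl_append]
  simp

end Aux

theorem eq_iff_path_relations
    (n : ℕ) (hn : 1 ≤ n) (T : Type*) [Group T] [Finite T] [Nontrivial T]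
    (f g : (Fin n → T) →* (Fin n → T))
    (θf θg : Fin n → Option (Fin n)) (φf φg : Fin n → (T →* T))
    (hf : End0Data θf φf f) (hg : End0Data θg φg g)
    (σ : Fin n → T) :
    f σ = g σ ↔
      ∀ (m : ℕ) (c : Fin (m + 1) → Fin n × Bool),
        IsDirectedPath θf θg m c →
        coord σ (arrowHead θf θg (c (Fin.last m))) =
          pathMap φf φg m c (coord σ (arrowTail θf θg (c 0))) := by
  constructor
  · intro hfg m
    induction m with
    | zero =>
      intro c hc
      rw [pathMap_zero]
      have : Fin.last 0 = (0 : Fin 1) := rfl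
      rw [this]
      exact single_arrow hf hg σ hfg (c 0) (hc.1 0)
    | succ m ih =>
      intro c hc
      have hrestrict : IsDirectedPath θf θg m (fun k => c k.castSucc) := by
        refine ⟨fun k => hc.1 _, fun k => ?_⟩
        have := hc.2 k.castSucc
        rwa [Fin.succ_castSucc] at this
      have hih := ih _ hrestrict
      have hlink : arrowHead θf θg (c (Fin.last m).castSucc) =
          arrowTail θf θg (c (Fin.last (m + 1))) := by
        have := hc.2 (Fin.last m)
        rwa [Fin.succ_last] at this
      rw [pathMap_succ]
      have h0 : ((0 : Fin (m+1)).castSucc) = (0 : Fin (m+2)) := rfl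
      simp only [h0] at hih
      rw [← hih, hlink]
      exact single_arrow hf hg σ hfg _ (hc.1 _)
  · intro h
    funext i
    rw [hf.2, hg.2]
    rcases hθg : θg i with _ | j
    · rcases hθf : θf i with _ | j
      · rfl
      · have hrel := h 0 (fun _ => (i, false))
          ⟨fun k => by simp [arrowValid, hθf], fun k => k.elim0⟩
        rw [pathMap_zero] at hrel
        simp only [arrowHead, arrowTail, arrowMap, Bool.false_eq_true, if_neg, if_false,
          Function.comp_apply, hθf, hθg, coord, Option.elim] at hrel
        have hbij := hf.1 i (by simp [hθf])
        simp only [Option.elim]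
        rw [hrel, map_one, Function.invFun_eq (hbij.2 _)]
    · have hrel := h 0 (fun _ => (i, true))
        ⟨fun k => by simp [arrowValid, hθg], fun k => k.elim0⟩
      rw [pathMap_zero] at hrel
      simp only [arrowHead, arrowTail, arrowMap, if_true, Function.comp_apply,
        hθg, coord, Option.elim] at hrel
      have hbij := hg.1 i (by simp [hθg])
      have h2 := congrArg (φg i) hrel
      rw [Function.invFun_eq (hbij.2 _)] at h2
      rw [coord_map_eq σ (φf i) (θf i)]
      simp only [Option.elim]
      exact h2.symm
end

section
/- Let G be a finite group, let f : G → Aut(G) be a group homomorphism, and let g : G → G be a map satisfying g(στ) = g(σ)·f(σ)(g(τ)) for all σ, τ ∈ G. Then N = {ρ(g(σ))·f(σ) : σ ∈ G} is a subgroup of Hol(G), and N is a regular subgroup of Perm(G) if and only if g is bijective. -/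
/-!
STATEMENT 11: Let `G` be a finite group, `f : G → Aut(G)` a homomorphism, and
`g : G → G` a map with `g(στ) = g(σ)·f(σ)(g(τ))` for all `σ, τ`.  Then
`N = {ρ(g(σ))·f(σ) : σ ∈ G}` is a subgroup of `Hol(G)`, and `N` is a regular
subgroup of `Perm(G)` iff `g` is bijective.

Here `ρ(σ)(τ) = τσ⁻¹`, so the permutation `ρ(g(σ))·f(σ)` sends
`x ↦ f(σ)(x) · g(σ)⁻¹`; in particular every element of `N` lies in
`Hol(G) = ρ(G) ⋊ Aut(G)` by construction.  "`N` is a subgroup" is expressed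
by the existence of a subgroup of `Perm(G)` whose carrier set is exactly
`{η | ∃ σ, ∀ x, η x = f σ x * (g σ)⁻¹}`, and regularity means that
evaluation at `1` is a bijection from this set to `G`.
-/

theorem holomorph_subgroup_and_regularity_criterion
    (G : Type*) [Group G] [Finite G]
    (f : G →* MulAut G) (g : G → G)
    (hg : ∀ σ τ : G, g (σ * τ) = g σ * f σ (g τ)) :
    (∃ N : Subgroup (Equiv.Perm G),
        (N : Set (Equiv.Perm G)) =
          {η : Equiv.Perm G | ∃ σ : G, ∀ x : G, η x = f σ x * (g σ)⁻¹}) ∧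
    (Function.Bijective
        (fun η : {η : Equiv.Perm G // ∃ σ : G, ∀ x : G, η x = f σ x * (g σ)⁻¹} =>
          (η : Equiv.Perm G) 1) ↔
      Function.Bijective g) := by
  have hg1 : g 1 = 1 := by
    have := hg 1 1
    simp only [mul_one, map_one, MulAut.one_apply] at this
    exact left_eq_mul.mp this
  -- the permutation x ↦ f σ x * (g σ)⁻¹
  set η : G → Equiv.Perm G := fun σ =>
    (f σ).toEquiv.trans (Equiv.mulRight (g σ)⁻¹) with hη
  have hηapp : ∀ σ x, η σ x = f σ x * (g σ)⁻¹ := fun σ x => rfl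
  have hmul : ∀ σ τ, η (σ * τ) = η σ * η τ := by
    intro σ τ
    ext x
    simp only [Equiv.Perm.mul_apply, hηapp, map_mul, MulAut.mul_apply, hg, mul_inv_rev,
      map_mul, map_inv, mul_assoc]
  have hone : η 1 = 1 := by
    ext x
    simp [hηapp, hg1]
  let h : G →* Equiv.Perm G :=
    { toFun := η, map_one' := hone, map_mul' := hmul }
  have hmem : ∀ e : Equiv.Perm G,
      (∃ σ : G, ∀ x : G, e x = f σ x * (g σ)⁻¹) ↔ ∃ σ, η σ = e := by
    intro e
    constructor
    · rintro ⟨σ, hσ⟩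
      exact ⟨σ, (Equiv.ext fun x => (hσ x).symm)⟩
    · rintro ⟨σ, hσ⟩
      exact ⟨σ, fun x => by rw [← hσ]; rfl⟩
  constructor
  · refine ⟨h.range, ?_⟩
    ext e
    simpa [h, MonoidHom.mem_range] using (hmem e).symm
  · constructor
    · rintro ⟨-, hsurj⟩
      -- surjectivity of evaluation gives surjectivity of g; finiteness gives bijectivity
      have hgsurj : Function.Surjective g := by
        intro y
        obtain ⟨⟨e, σ, hσ⟩, he⟩ := hsurj y⁻¹
        refine ⟨σ, ?_⟩
        have : e 1 = y⁻¹ := he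
        rw [hσ 1] at this
        simp only [map_one] at this
        have : (g σ)⁻¹ = y⁻¹ := by simpa using this
        exact inv_injective this
      exact Finite.surjective_iff_bijective.mp hgsurj
    · intro hgbij
      constructor
      · rintro ⟨e, σ, hσ⟩ ⟨e', τ, hτ⟩ hee
        have h1 : e 1 = e' 1 := hee
        rw [hσ 1, hτ 1] at h1
        simp only [map_one, one_mul] at h1
        have hgστ : g σ = g τ := inv_injective h1
        have hστ : σ = τ := hgbij.1 hgστ
        subst hστ
        exact Subtype.ext (Equiv.ext fun x => by rw [hσ x, hτ x])
      · intro y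
        obtain ⟨σ, hσ⟩ := hgbij.2 y⁻¹
        refine ⟨⟨η σ, σ, fun x => rfl⟩, ?_⟩
        simp [hηapp, hσ]
end

section
/- Suppose that the outer automorphism group Out(T) of T is solvable. Let f : G → Aut^0(G) be a group homomorphism and suppose that the kernel of f_{S_n} is a perfect group (equal to its own commutator subgroup). Then f(ker(f_{S_n})) ⊆ Inn(G). -/
/-!
STATEMENT 12: Suppose the outer automorphism group `Out(T) = Aut(T)/Inn(T)`
is solvable.  Let `f : G → Aut⁰(G)` be a homomorphism and suppose that
`ker(f_{Sₙ})` is a perfect group.  Then `f(ker(f_{Sₙ})) ⊆ Inn(G)`.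

Setting: `n ≥ 1`, `T` a nontrivial finite group, `G = Tⁿ = (Fin n → T)`.
That `f` takes values in `Aut⁰(G) = Aut(T) wr Sₙ` is expressed by the data
`Θ : G →* Equiv.Perm (Fin n)` (which is `f_{Sₙ}`) and automorphisms
`Φ σ i ∈ Aut(T)` with `f(σ)(x)ᵢ = Φ σ i (x_{θ_σ(i)})` where
`θ_σ = (Θ σ)⁻¹` (the inverse makes `Θ` a genuine homomorphism to `Sₙ`,
matching the projection `Aut(T) wr Sₙ → Sₙ`; its kernel is `ker(f_{Sₙ})`).
`Inn(G)` is the range of `MulAut.conj`, and `Inn(T)` the range of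
`MulAut.conj : T →* MulAut T` (a normal subgroup of `Aut(T)`: this fact is
supplied as the instance hypothesis `hnormal` so that the quotient `Out(T)`
makes sense).  Perfectness of `ker(f_{Sₙ})` means it equals its own
commutator subgroup.
-/

theorem inner_on_kernel_of_solvable_out
    (n : ℕ) (hn : 1 ≤ n) (T : Type*) [Group T] [Finite T] [Nontrivial T]
    [hnormal : ((MulAut.conj : T →* MulAut T).range).Normal]
    (hout : IsSolvable (MulAut T ⧸ (MulAut.conj : T →* MulAut T).range))
    (f : (Fin n → T) →* MulAut (Fin n → T))
    (Θ : (Fin n → T) →* Equiv.Perm (Fin n))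
    (Φ : (Fin n → T) → Fin n → MulAut T)
    (hfΘΦ : ∀ (σ : Fin n → T) (x : Fin n → T) (i : Fin n),
      f σ x i = Φ σ i (x ((Θ σ)⁻¹ i)))
    (hperfect : ⁅Θ.ker, Θ.ker⁆ = Θ.ker) :
    ∀ τ ∈ Θ.ker,
      f τ ∈ (MulAut.conj : (Fin n → T) →* MulAut (Fin n → T)).range := by
  set K := Θ.ker with hK
  -- Φ is determined on constants
  have hconst : ∀ (σ : Fin n → T) (i : Fin n) (t : T),
      Φ σ i t = f σ (fun _ => t) i := by
    intro σ i t
    rw [hfΘΦ]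
  -- the per-coordinate maps are multiplicative on K
  have hmul : ∀ (σ τ : Fin n → T), σ ∈ K → ∀ i, Φ (σ * τ) i = Φ σ i * Φ τ i := by
    intro σ τ hσ i
    ext t
    have hσ1 : Θ σ = 1 := hσ
    calc Φ (σ * τ) i t = f (σ * τ) (fun _ => t) i := hconst _ _ _
      _ = f σ (f τ (fun _ => t)) i := by rw [map_mul]; rfl
      _ = Φ σ i ((f τ (fun _ => t)) ((Θ σ)⁻¹ i)) := hfΘΦ _ _ _
      _ = Φ σ i ((f τ (fun _ => t)) i) := by rw [hσ1]; simp
      _ = Φ σ i (Φ τ i t) := by rw [← hconst τ i t]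
      _ = (Φ σ i * Φ τ i) t := rfl
  have hone : ∀ i, Φ 1 i = 1 := by
    intro i
    ext t
    have := hconst 1 i t
    simp only [map_one] at this
    simpa using this
  -- Out(T) quotient map
  set Q : MulAut T →* (MulAut T ⧸ (MulAut.conj : T →* MulAut T).range) :=
    QuotientGroup.mk' _ with hQ
  -- perfectness of K as an abstract group
  have hKperf : (⊤ : Subgroup K) = ⁅(⊤ : Subgroup K), (⊤ : Subgroup K)⁆ := by
    apply Subgroup.map_injective K.subtype_injective
    rw [Subgroup.map_commutator]
    rw [← MonoidHom.range_eq_map, Subgroup.range_subtype, hperfect]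
  -- the key claim: each Φ τ i is inner
  have key : ∀ τ ∈ K, ∀ i, Φ τ i ∈ (MulAut.conj : T →* MulAut T).range := by
    intro τ hτ i
    -- build the homomorphism χ : K →* Out T
    let χ : K →* (MulAut T ⧸ (MulAut.conj : T →* MulAut T).range) :=
      { toFun := fun σ => Q (Φ σ.1 i)
        map_one' := by simp [hone i]
        map_mul' := by
          intro σ τ'
          simp only [Subgroup.coe_mul]
          rw [hmul σ.1 τ'.1 σ.2 i, map_mul] }
    have hrange : ∀ k, χ.range ≤ derivedSeries _ k := by
      intro k
      induction k with
      | zero => simp [derivedSeries_zero]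
      | succ k ih =>
        have h1 : χ.range = ⁅χ.range, χ.range⁆ :=
          calc χ.range = Subgroup.map χ ⊤ := MonoidHom.range_eq_map χ
            _ = Subgroup.map χ ⁅(⊤ : Subgroup K), ⊤⁆ := by rw [← hKperf]
            _ = ⁅Subgroup.map χ ⊤, Subgroup.map χ ⊤⁆ := Subgroup.map_commutator _ _ _
            _ = ⁅χ.range, χ.range⁆ := by rw [← MonoidHom.range_eq_map]
        rw [h1, derivedSeries_succ]
        exact Subgroup.commutator_mono ih ih
    obtain ⟨k, hk⟩ := hout.solvable
    have : χ ⟨τ, hτ⟩ = 1 := by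
      have := hrange k (⟨⟨τ, hτ⟩, rfl⟩ : χ ⟨τ, hτ⟩ ∈ χ.range)
      rw [hk] at this
      exact this
    have : Q (Φ τ i) = 1 := this
    rwa [hQ, ← MonoidHom.mem_ker, QuotientGroup.ker_mk'] at this
  -- conclude
  intro τ hτ
  choose t ht using fun i => key τ hτ i
  refine ⟨t, ?_⟩
  have hτ1 : Θ τ = 1 := hτ
  ext x i
  rw [hfΘΦ τ x i, hτ1]
  simp only [inv_one, Equiv.Perm.coe_one, id_eq]
  rw [← ht i]
  simp [MulAut.conj_apply]
end

section
/- Let f : G → Aut^0(G) be a group homomorphism and let g : G → G be a map satisfying g(στ) = g(σ)·f(σ)(g(τ)) for all σ, τ ∈ G. Let σ, τ ∈ G be such that στ = τσ and τ ∈ ker(f_{S_n}). Then for every i ∈ {1,…,n} we have φ_{σ,i}(a_τ^(θ_σ(i))) = (a_σ^(i))^{-1} · a_τ^(i) · φ_{τ,i}(a_σ^(i)). -/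
theorem commuting_kernel_relation
    (n : ℕ) (hn : 1 ≤ n) (T : Type*) [Group T] [Finite T] [Nontrivial T]
    (f : (Fin n → T) →* MulAut (Fin n → T))
    (Θ : (Fin n → T) →* Equiv.Perm (Fin n))
    (Φ : (Fin n → T) → Fin n → MulAut T)
    (hfΘΦ : ∀ (σ : Fin n → T) (x : Fin n → T) (i : Fin n),
      f σ x i = Φ σ i (x ((Θ σ)⁻¹ i)))
    (g : (Fin n → T) → (Fin n → T))
    (hg : ∀ σ τ : Fin n → T, g (σ * τ) = g σ * f σ (g τ))
    (σ τ : Fin n → T) (hcomm : σ * τ = τ * σ) (hτ : τ ∈ Θ.ker) :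
    ∀ i : Fin n,
      Φ σ i (g τ ((Θ σ)⁻¹ i)) = (g σ i)⁻¹ * g τ i * Φ τ i (g σ i) := by
  intro i
  have hτ1 : Θ τ = 1 := hτ
  have h1 : g σ * f σ (g τ) = g τ * f τ (g σ) := by rw [← hg, ← hg, hcomm]
  have h := congrFun h1 i
  simp only [Pi.mul_apply, hfΘΦ, hτ1, inv_one, Equiv.Perm.one_apply] at h
  rw [mul_assoc, ← h]
  group
end

section
/- Let f : G → Aut^0(G) be a group homomorphism and let g : G → G be a map satisfying g(στ) = g(σ)·f(σ)(g(τ)) for all σ, τ ∈ G. For each k ∈ {1,…,r} fix a representative i_k ∈ X_k, and for each i ∈ X_k choose σ_i ∈ H with f_{S_n}(σ_i)(i_k) = i. Suppose that for every i ∈ {1,…,n}∖X_0 the element σ_i commutes with every element of ker(f_{S_n}), and suppose that f(ker(f_{S_n})) ⊆ Inn(G). Then the image g(ker(f_{S_n})) has cardinality at most |T|^(#X_0 + 2r). -/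
/-!
For `τ ∈ ker f_{Sₙ}`, `f τ` is conjugation by some `c_τ`. If `σ` commutes with `τ`, the cocycle
identity for `στ = τσ`, together with `f σ ∘ f τ ∘ (f σ)⁻¹ = f τ`, expresses `g τ` through
`f σ (g τ)` and `f σ c_τ`. Read at a coordinate `i = f_{Sₙ}(σ_i)(i_k)` of an orbit `X_k`, this says
that `(g τ)_i` depends only on `(g τ)_{i_k}` and `(c_τ)_{i_k}`. Hence `g τ` is determined by its
coordinates on `X_0` and by `2r` further elements of `T`.
-/

section Cocycle

variable {G : Type*} [Group G] {f : G →* MulAut G} {g : G → G}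

theorem cocycle_mul_comm (hg : ∀ σ τ, g (σ * τ) = g σ * f σ (g τ)) {σ τ : G}
    (h : Commute σ τ) : g σ * f σ (g τ) = g τ * f τ (g σ) := by
  rw [← hg, ← hg, h.eq]

theorem MulAut.conj_map (φ : MulAut G) (x : G) :
    MulAut.conj (φ x) = φ * MulAut.conj x * φ⁻¹ := by
  ext y
  simp [MulAut.conj_apply]

theorem cocycle_eq_of_commute_of_conj (hg : ∀ σ τ, g (σ * τ) = g σ * f σ (g τ)) {σ τ c : G}
    (h : Commute σ τ) (hc : f τ = MulAut.conj c) :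
    g τ = g σ * f σ (g τ) * f σ c * (g σ)⁻¹ * (f σ c)⁻¹ := by
  have hconj : MulAut.conj (f σ c) = MulAut.conj c := by
    rw [MulAut.conj_map, ← hc, ← map_inv, ← map_mul, ← map_mul, h.eq, mul_inv_cancel_right]
  have hconj' := congrArg (· (g σ)⁻¹) hconj
  simp only [MulAut.conj_apply] at hconj'
  calc g τ = g τ * (c * g σ * c⁻¹) * (c * (g σ)⁻¹ * c⁻¹) := by group
    _ = g σ * f σ (g τ) * (f σ c * (g σ)⁻¹ * (f σ c)⁻¹) := by
      rw [cocycle_mul_comm hg h, hc, MulAut.conj_apply, hconj']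
    _ = g σ * f σ (g τ) * f σ c * (g σ)⁻¹ * (f σ c)⁻¹ := by group

end Cocycle

theorem cocycle_apply_eq_of_commute_of_conj {ι T : Type*} [Group T]
    {f : (ι → T) →* MulAut (ι → T)} {Θ : (ι → T) →* Equiv.Perm ι} {Φ : (ι → T) → ι → MulAut T}
    (hfΘΦ : ∀ σ x i, f σ x i = Φ σ i (x ((Θ σ)⁻¹ i))) {g : (ι → T) → (ι → T)}
    (hg : ∀ σ τ, g (σ * τ) = g σ * f σ (g τ)) {σ τ c : ι → T}
    (h : Commute σ τ) (hc : f τ = MulAut.conj c) {i j : ι} (hj : Θ σ j = i) :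
    g τ i = g σ i * Φ σ i (g τ j) * Φ σ i (c j) * (g σ i)⁻¹ * (Φ σ i (c j))⁻¹ := by
  have hj' : (Θ σ)⁻¹ i = j := Equiv.Perm.inv_eq_iff_eq.mpr hj.symm
  simpa only [Pi.mul_apply, Pi.inv_apply, hfΘΦ, hj'] using
    congrFun (cocycle_eq_of_commute_of_conj hg h hc) i

theorem Nat.card_image_le_of_factors {α β γ : Type*} [Finite γ] {s : Set α} (g : α → β)
    (ψ : α → γ) (h : ∀ x ∈ s, ∀ y ∈ s, ψ x = ψ y → g x = g y) :
    Nat.card (g '' s) ≤ Nat.card γ := by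
  refine Nat.card_le_card_of_injective (fun y => ψ y.2.choose) fun y y' hyy' => Subtype.ext ?_
  rw [← y.2.choose_spec.2, ← y'.2.choose_spec.2]
  exact h _ y.2.choose_spec.1 _ y'.2.choose_spec.1 hyy'

theorem g_image_of_kernel_bound_general
    (n : ℕ) (T : Type*) [Group T] [Finite T]
    (f : (Fin n → T) →* MulAut (Fin n → T))
    (Θ : (Fin n → T) →* Equiv.Perm (Fin n))
    (Φ : (Fin n → T) → Fin n → MulAut T)
    (hfΘΦ : ∀ (σ : Fin n → T) (x : Fin n → T) (i : Fin n),
      f σ x i = Φ σ i (x ((Θ σ)⁻¹ i)))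
    (g : (Fin n → T) → (Fin n → T))
    (hg : ∀ σ τ : Fin n → T, g (σ * τ) = g σ * f σ (g τ))
    (H : Subgroup (Fin n → T))
    (X0 : Set (Fin n))
    (r : ℕ) (X : Fin r → Set (Fin n))
    (hXcover : ∀ i : Fin n, i ∉ X0 → ∃ k, i ∈ X k)
    (idx : Fin r → Fin n)
    (sel : Fin n → (Fin n → T))
    (hsel : ∀ k, ∀ i ∈ X k, sel i ∈ H ∧ Θ (sel i) (idx k) = i)
    (hcomm : ∀ i : Fin n, i ∉ X0 → ∀ τ ∈ Θ.ker, Commute (sel i) τ)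
    (hinn : ∀ τ ∈ Θ.ker,
      f τ ∈ (MulAut.conj : (Fin n → T) →* MulAut (Fin n → T)).range) :
    Nat.card (g '' (Θ.ker : Set (Fin n → T))) ≤
      Nat.card T ^ (Nat.card X0 + 2 * r) := by
  simp only [MonoidHom.mem_range] at hinn
  choose! c hc using hinn
  have hcoord : ∀ τ ∈ Θ.ker, ∀ i ∉ X0, ∀ k, i ∈ X k → g τ i = g (sel i) i *
      Φ (sel i) i (g τ (idx k)) * Φ (sel i) i (c τ (idx k)) * (g (sel i) i)⁻¹ *
      (Φ (sel i) i (c τ (idx k)))⁻¹ := fun τ hτ i hi k hik =>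
    cocycle_apply_eq_of_commute_of_conj hfΘΦ hg (hcomm i hi τ hτ) (hc τ hτ).symm
      (hsel k i hik).2
  calc Nat.card (g '' (Θ.ker : Set (Fin n → T)))
      ≤ Nat.card ((X0 → T) × (Fin r → T × T)) := by
        refine Nat.card_image_le_of_factors g
          (fun τ => (fun i => g τ i, fun k => (g τ (idx k), c τ (idx k)))) ?_
        intro τ hτ τ' hτ' h
        simp only [Prod.mk.injEq, funext_iff] at h
        funext i
        by_cases hi : i ∈ X0
        · exact h.1 ⟨i, hi⟩
        · obtain ⟨k, hik⟩ := hXcover i hi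
          rw [hcoord τ hτ i hi k hik, hcoord τ' hτ' i hi k hik, (h.2 k).1, (h.2 k).2]
    _ = Nat.card T ^ (Nat.card X0 + 2 * r) := by
        simp [Nat.card_prod, Nat.card_fun, pow_add, pow_mul, sq]

theorem g_image_of_kernel_bound
    (n : ℕ) (hn : 1 ≤ n) (T : Type*) [Group T] [Finite T] [Nontrivial T]
    (f : (Fin n → T) →* MulAut (Fin n → T))
    (Θ : (Fin n → T) →* Equiv.Perm (Fin n))
    (Φ : (Fin n → T) → Fin n → MulAut T)
    (hfΘΦ : ∀ (σ : Fin n → T) (x : Fin n → T) (i : Fin n),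
      f σ x i = Φ σ i (x ((Θ σ)⁻¹ i)))
    (g : (Fin n → T) → (Fin n → T))
    (hg : ∀ σ τ : Fin n → T, g (σ * τ) = g σ * f σ (g τ))
    (p : ℕ) (hp : p.Prime) (hpT : p ∣ Nat.card T)
    (P : Fin n → Subgroup T) (hP : ∀ i, Nat.card (P i) = p)
    (H : Subgroup (Fin n → T)) (hH : H = Subgroup.pi Set.univ P)
    (X0 : Set (Fin n)) (hX0 : X0 = {i : Fin n | ∀ σ ∈ H, Θ σ i = i})
    (r : ℕ) (X : Fin r → Set (Fin n))
    (hXorb : ∀ k, ∃ i₀ ∈ X k, X k = {j : Fin n | ∃ σ ∈ H, Θ σ i₀ = j})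
    (hXsize : ∀ k, 1 < Nat.card (X k))
    (hXinj : Function.Injective X)
    (hXcover : ∀ i : Fin n, i ∉ X0 → ∃ k, i ∈ X k)
    (idx : Fin r → Fin n) (hidx : ∀ k, idx k ∈ X k)
    (sel : Fin n → (Fin n → T))
    (hsel : ∀ k, ∀ i ∈ X k, sel i ∈ H ∧ Θ (sel i) (idx k) = i)
    (hcomm : ∀ i : Fin n, i ∉ X0 → ∀ τ ∈ Θ.ker, Commute (sel i) τ)
    (hinn : ∀ τ ∈ Θ.ker,
      f τ ∈ (MulAut.conj : (Fin n → T) →* MulAut (Fin n → T)).range) :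
    Nat.card (g '' (Θ.ker : Set (Fin n → T))) ≤
      Nat.card T ^ (Nat.card X0 + 2 * r) :=
  g_image_of_kernel_bound_general n T f Θ Φ hfΘΦ g hg H X0 r X hXcover idx sel hsel hcomm hinn
end

section
/- Let f : G → Aut^0(G) be a group homomorphism and let g : G → G be a map satisfying g(στ) = g(σ)·f(σ)(g(τ)) for all σ, τ ∈ G. Suppose that f_{S_n}(H) ≠ 1 and that |f_{S_n}(G)| = |T|^m. If g is bijective and #g(ker(f_{S_n})) ≤ |T|^(#X_0 + 2r), then p ≤ 3. -/
/-!
The group `K = Θ(H)` is abelian of order `p ^ m` and acts faithfully on `Fin n`. Because `K` is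
abelian, an element is determined by where it sends one base point of each nontrivial orbit, so
`K` embeds into the product of those orbits; their sizes are powers `p ^ aₖ` with `aₖ ≥ 1`, hence
`m ≤ ∑ aₖ`. From `p ^ a ≥ a + (p - 1)` the orbit decomposition of `Fin n` gives
`n ≥ #X₀ + m + r (p - 1)`. On the other side `|ker Θ| = |T| ^ n / |T| ^ m`, and the injectivity of
`g` turns the hypothesis on `g(ker Θ)` into `n ≤ #X₀ + 2 r + m`. As `K ≠ 1` there is at least one
nontrivial orbit, so `p - 1 ≤ 2`.
-/

open MulAction
open scoped Function

theorem Nat.add_sub_one_le_pow {p j : ℕ} (hp : 2 ≤ p) (hj : 1 ≤ j) : j + (p - 1) ≤ p ^ j := by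
  have bernoulli := one_add_mul_le_pow (a := (p : ℤ) - 1) (by omega) j
  simp only [add_sub_cancel] at bernoulli
  have : (j : ℤ) + (p - 1) ≤ 1 + j * (p - 1) := by nlinarith
  zify [show 1 ≤ p by omega]
  linarith

theorem Nat.sum_card_le_card_of_pairwise_disjoint {ι α : Type*} [Fintype ι] [Finite α]
    (s : ι → Set α) (hs : Pairwise (Disjoint on s)) : ∑ i, Nat.card (s i) ≤ Nat.card α := by
  simp only [Nat.card_coe_set_eq]
  rw [← finsum_eq_sum_of_fintype, ← Set.ncard_iUnion_of_finite (fun _ ↦ Set.toFinite _) hs]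
  exact Set.ncard_le_card _

theorem MonoidHom.le_add_of_card_ker_le {G H : Type*} [Group G] [Group H] (f : G →* H)
    {t n m k : ℕ} (ht : 1 < t) (hG : Nat.card G = t ^ n) (hrange : Nat.card f.range = t ^ m)
    (hker : Nat.card f.ker ≤ t ^ k) : n ≤ k + m := by
  refine (Nat.pow_le_pow_iff_right ht).mp ?_
  rw [pow_add, ← hG, ← hrange, ← Subgroup.index_ker, ← f.ker.card_mul_index]
  gcongr

namespace MulAction

theorem fixedPoints_map_eq_setOf {G α : Type*} [Group G] (φ : G →* Equiv.Perm α)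
    (H : Subgroup G) : fixedPoints (H.map φ) α = {a | ∀ σ ∈ H, φ σ a = a} := by
  ext a
  simp [mem_fixedPoints, Subgroup.mem_map]

theorem orbit_map_eq_setOf {G α : Type*} [Group G] (φ : G →* Equiv.Perm α) (H : Subgroup G)
    (a : α) : orbit (H.map φ) a = {b | ∃ σ ∈ H, φ σ a = b} := by
  ext b
  simp [mem_orbit_iff, Subgroup.mem_map]

variable {K α : Type*} [Group K] [MulAction K α]

theorem disjoint_fixedPoints_orbit {a : α} (ha : 1 < Nat.card (orbit K a)) :
    Disjoint (fixedPoints K α) (orbit K a) := by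
  refine Set.disjoint_left.mpr fun b hb hba ↦ ?_
  have : Subsingleton (orbit K b) := (subsingleton_orbit_iff_mem_fixedPoints.mpr hb).coe_sort
  rw [← orbit_eq_iff.mpr hba] at ha
  exact ha.not_ge (Finite.card_le_one_iff_subsingleton.mpr this)

theorem exists_notMem_fixedPoints [FaithfulSMul K α] [Nontrivial K] :
    ∃ a, a ∉ fixedPoints K α := by
  obtain ⟨g, hg⟩ := exists_ne (1 : K)
  by_contra! h
  exact hg (eq_of_smul_eq_smul (α := α) fun a ↦ by rw [h a g, one_smul])

theorem card_le_prod_card_orbit [IsMulCommutative K] [FaithfulSMul K α] [Finite α]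
    {ι : Type*} [Fintype ι] (x : ι → α) (hx : ∀ a ∉ fixedPoints K α, ∃ k, a ∈ orbit K (x k)) :
    Nat.card K ≤ ∏ k, Nat.card (orbit K (x k)) := by
  rw [← Nat.card_pi]
  refine Nat.card_le_card_of_injective (fun g k ↦ ⟨g • x k, mem_orbit _ g⟩) fun g h hgh ↦ ?_
  have hx_eq (k : ι) : g • x k = h • x k := congrArg Subtype.val (congrFun hgh k)
  refine eq_of_smul_eq_smul (α := α) fun a ↦ ?_
  by_cases ha : a ∈ fixedPoints K α
  · rw [ha g, ha h]
  obtain ⟨k, c, rfl⟩ := hx a ha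
  rw [smul_smul, smul_smul, mul_comm' g, mul_comm' h, mul_smul, mul_smul, hx_eq k]

theorem card_fixedPoints_add_sum_card_orbit_le [Finite α] {ι : Type*} [Fintype ι] (x : ι → α)
    (hx_card : ∀ k, 1 < Nat.card (orbit K (x k))) (hx_inj : Function.Injective (orbit K ∘ x)) :
    Nat.card (fixedPoints K α) + ∑ k, Nat.card (orbit K (x k)) ≤ Nat.card α := by
  let s : Option ι → Set α := fun o ↦ o.elim (fixedPoints K α) (orbit K ∘ x)
  have hs : Pairwise (Disjoint on s) := by
    rintro (_ | k) (_ | l) hkl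
    · exact absurd rfl hkl
    · exact disjoint_fixedPoints_orbit (hx_card l)
    · exact (disjoint_fixedPoints_orbit (hx_card k)).symm
    · exact (orbit.eq_or_disjoint _ _).resolve_left fun h ↦ hkl (congrArg some (hx_inj h))
  simpa [s, Fintype.sum_option] using Nat.sum_card_le_card_of_pairwise_disjoint s hs

theorem card_fixedPoints_add_le [IsMulCommutative K] [FaithfulSMul K α] [Finite α]
    {p m : ℕ} [Fact p.Prime] (hK : Nat.card K = p ^ m) {ι : Type*} [Fintype ι] (x : ι → α)
    (hx_card : ∀ k, 1 < Nat.card (orbit K (x k))) (hx_inj : Function.Injective (orbit K ∘ x))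
    (hx : ∀ a ∉ fixedPoints K α, ∃ k, a ∈ orbit K (x k)) :
    Nat.card (fixedPoints K α) + m + Fintype.card ι * (p - 1) ≤ Nat.card α := by
  have hp : p.Prime := Fact.out
  have hpow (k : ι) : ∃ j, 1 ≤ j ∧ Nat.card (orbit K (x k)) = p ^ j := by
    obtain ⟨j, hj⟩ := (IsPGroup.of_card hK).card_orbit (x k)
    refine ⟨j, Nat.one_le_iff_ne_zero.mpr fun hj0 ↦ ?_, hj⟩
    rw [hj0, pow_zero] at hj
    exact (hx_card k).ne' hj
  choose j hj_pos hj using hpow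
  have hm : m ≤ ∑ k, j k := by
    refine (Nat.pow_le_pow_iff_right hp.one_lt).mp ?_
    calc p ^ m = Nat.card K := hK.symm
      _ ≤ ∏ k, Nat.card (orbit K (x k)) := card_le_prod_card_orbit x hx
      _ = p ^ ∑ k, j k := by simp only [hj, Finset.prod_pow_eq_pow_sum]
  have horbits : ∑ k, j k + Fintype.card ι * (p - 1) ≤ ∑ k, Nat.card (orbit K (x k)) :=
    calc ∑ k, j k + Fintype.card ι * (p - 1) = ∑ k, (j k + (p - 1)) := by
          simp [Finset.sum_add_distrib]
      _ ≤ _ := Finset.sum_le_sum fun k _ ↦ hj k ▸ Nat.add_sub_one_le_pow hp.two_le (hj_pos k)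
  have := card_fixedPoints_add_sum_card_orbit_le x hx_card hx_inj
  omega

end MulAction

theorem p_le_three_of_regular_general
    (n : ℕ) (T : Type*) [Group T] [Finite T] [Nontrivial T]
    (Θ : (Fin n → T) →* Equiv.Perm (Fin n))
    (g : (Fin n → T) → (Fin n → T))
    (p : ℕ) (hp : p.Prime)
    (H : Subgroup (Fin n → T))
    (X0 : Set (Fin n)) (hX0 : X0 = {i : Fin n | ∀ σ ∈ H, Θ σ i = i})
    (r : ℕ) (X : Fin r → Set (Fin n))
    (hXorb : ∀ k, ∃ i₀ ∈ X k, X k = {j : Fin n | ∃ σ ∈ H, Θ σ i₀ = j})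
    (hXsize : ∀ k, 1 < Nat.card (X k))
    (hXinj : Function.Injective X)
    (hXcover : ∀ i : Fin n, i ∉ X0 → ∃ k, i ∈ X k)
    (m : ℕ)
    (hrank : Nonempty ((Subgroup.map Θ H) ≃* (Fin m → Multiplicative (ZMod p))))
    (hHne : Subgroup.map Θ H ≠ ⊥)
    (hrange : Nat.card Θ.range = Nat.card T ^ m)
    (hgbij : Function.Bijective g)
    (hbound : Nat.card (g '' (Θ.ker : Set (Fin n → T))) ≤
      Nat.card T ^ (Nat.card X0 + 2 * r)) :
    p ≤ 3 := by
  obtain ⟨e⟩ := hrank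
  have : Fact p.Prime := ⟨hp⟩
  have : IsMulCommutative (H.map Θ) :=
    isMulCommutative_iff.mpr fun a b ↦ e.injective (by rw [map_mul, map_mul, mul_comm])
  have : Nontrivial (H.map Θ) := (Subgroup.nontrivial_iff_ne_bot _).mpr hHne
  have hcard : Nat.card (H.map Θ) = p ^ m := by
    rw [Nat.card_congr e.toEquiv]
    simp
  choose i₀ _ hXorb using hXorb
  obtain rfl : X = fun k ↦ orbit (H.map Θ) (i₀ k) :=
    funext fun k ↦ (hXorb k).trans (orbit_map_eq_setOf Θ H _).symm
  obtain rfl : X0 = fixedPoints (H.map Θ) (Fin n) := hX0.trans (fixedPoints_map_eq_setOf Θ H).symm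
  have hcount := card_fixedPoints_add_le hcard i₀ hXsize hXinj hXcover
  rw [Nat.card_image_of_injective hgbij.injective, SetLike.coe_sort_coe] at hbound
  have hker :=
    Θ.le_add_of_card_ker_le (n := n) Finite.one_lt_card (by simp [Nat.card_pi]) hrange hbound
  obtain ⟨i, hi⟩ := exists_notMem_fixedPoints (K := H.map Θ) (α := Fin n)
  obtain ⟨k, -⟩ := hXcover i hi
  have hr : 0 < r := k.pos
  rw [Nat.card_fin, Fintype.card_fin] at hcount
  have : r * (p - 1) ≤ r * 2 := by omega
  have := Nat.le_of_mul_le_mul_left this hr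
  omega

theorem p_le_three_of_regular
    (n : ℕ) (hn : 1 ≤ n) (T : Type*) [Group T] [Finite T] [Nontrivial T]
    (f : (Fin n → T) →* MulAut (Fin n → T))
    (Θ : (Fin n → T) →* Equiv.Perm (Fin n))
    (Φ : (Fin n → T) → Fin n → MulAut T)
    (hfΘΦ : ∀ (σ : Fin n → T) (x : Fin n → T) (i : Fin n),
      f σ x i = Φ σ i (x ((Θ σ)⁻¹ i)))
    (g : (Fin n → T) → (Fin n → T))
    (hg : ∀ σ τ : Fin n → T, g (σ * τ) = g σ * f σ (g τ))
    (p : ℕ) (hp : p.Prime) (hpT : p ∣ Nat.card T)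
    (P : Fin n → Subgroup T) (hP : ∀ i, Nat.card (P i) = p)
    (H : Subgroup (Fin n → T)) (hH : H = Subgroup.pi Set.univ P)
    (X0 : Set (Fin n)) (hX0 : X0 = {i : Fin n | ∀ σ ∈ H, Θ σ i = i})
    (r : ℕ) (X : Fin r → Set (Fin n))
    (hXorb : ∀ k, ∃ i₀ ∈ X k, X k = {j : Fin n | ∃ σ ∈ H, Θ σ i₀ = j})
    (hXsize : ∀ k, 1 < Nat.card (X k))
    (hXinj : Function.Injective X)
    (hXcover : ∀ i : Fin n, i ∉ X0 → ∃ k, i ∈ X k)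
    (m : ℕ)
    (hrank : Nonempty ((Subgroup.map Θ H) ≃* (Fin m → Multiplicative (ZMod p))))
    (hHne : Subgroup.map Θ H ≠ ⊥)
    (hrange : Nat.card Θ.range = Nat.card T ^ m)
    (hgbij : Function.Bijective g)
    (hbound : Nat.card (g '' (Θ.ker : Set (Fin n → T))) ≤
      Nat.card T ^ (Nat.card X0 + 2 * r)) :
    p ≤ 3 :=
  p_le_three_of_regular_general n T Θ g p hp H X0 hX0 r X hXorb hXsize hXinj hXcover m hrank hHne
    hrange hgbij hbound
end
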